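/- arXiv:0807.1826 — 7 statements merged into one kernel-verified Lean document; each statement's English description precedes it below -/
import Mathlib

section
/- If k has characteristic ≠ 2 and B = k[x]/(x²+γ), then a pair (f, δ) with f an algebra endomorphism of A and δ a left f-derivation defines a twisting map B ⊗ A → A ⊗ B if and only if δ² = γ(f² − id_A) and fδ + δf = 0. -/
/-!
Since `B` is free over the base with basis `1, x`, a linear map `τ : B ⊗ A → A ⊗ B` is
determined by `τ (1 ⊗ a) = a ⊗ 1` and the prescribed value on `x ⊗ a`. For this `τ`, the
compatibility with the multiplication of `A` is the `f`-Leibniz rule, unitality on `A` is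
`δ 1 = 0`, and compatibility with the multiplication of `B` only has content at the product
`x · x = -γ`. Evaluated at `x ⊗ x ⊗ a` that hexagon reads
`-γ a ⊗ 1 = (δ² a - γ f² a) ⊗ 1 + (f δ a + δ f a) ⊗ x`, and comparing coefficients of `1` and `x`
gives exactly the two relations.
-/

set_option maxHeartbeats 1000000

open TensorProduct Polynomial

/-- `B = k[x]/(x² + γ)`. -/
noncomputable abbrev Bg (k : Type*) [Field k] (γ : k) :=
  AdjoinRoot (X ^ 2 + C γ : k[X])

namespace AdjoinRoot

section NatDegreeTwo

variable {R : Type*} [CommRing R] {g : R[X]} (hg : g.Monic) (hdeg : g.natDegree = 2)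

noncomputable def basisOneRoot : Module.Basis (Fin 2) R (AdjoinRoot g) :=
  (powerBasis' hg).basis.reindex (finCongr hdeg)

@[simp] lemma basisOneRoot_zero : basisOneRoot hg hdeg 0 = 1 := by
  simp only [basisOneRoot, Module.Basis.reindex_apply, PowerBasis.basis_eq_pow]
  exact pow_zero _

@[simp] lemma basisOneRoot_one : basisOneRoot hg hdeg 1 = root g := by
  simp only [basisOneRoot, Module.Basis.reindex_apply, PowerBasis.basis_eq_pow]
  exact pow_one _

include hg hdeg in
lemma linearMap_ext_one_root {M : Type*} [AddCommMonoid M] [Module R M]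
    {L₁ L₂ : AdjoinRoot g →ₗ[R] M} (h₁ : L₁ 1 = L₂ 1) (hroot : L₁ (root g) = L₂ (root g)) :
    L₁ = L₂ :=
  (basisOneRoot hg hdeg).ext fun i => by fin_cases i <;> simpa

include hg hdeg in
lemma tmul_one_add_tmul_root_inj {M : Type*} [AddCommGroup M] [Module R M] {a b a' b' : M} :
    a ⊗ₜ[R] (1 : AdjoinRoot g) + b ⊗ₜ root g = a' ⊗ₜ 1 + b' ⊗ₜ root g ↔ a = a' ∧ b = b' := by
  refine ⟨fun h => ?_, fun ⟨ha, hb⟩ => ha ▸ hb ▸ rfl⟩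
  have coords (m : M) (i : Fin 2) : equivFinsuppOfBasisRight (basisOneRoot hg hdeg)
      (m ⊗ₜ basisOneRoot hg hdeg i) = Finsupp.single i m := by
    simp [equivFinsuppOfBasisRight_apply_tmul]
  have h' := congrArg (equivFinsuppOfBasisRight (basisOneRoot hg hdeg)) h
  simp only [map_add, ← basisOneRoot_zero hg hdeg, ← basisOneRoot_one hg hdeg, coords] at h'
  exact ⟨by simpa using congrArg (· 0) h', by simpa using congrArg (· 1) h'⟩

end NatDegreeTwo

end AdjoinRoot

section Hexagon

variable {R A B : Type*} [CommSemiring R] [Semiring A] [Algebra R A] [Semiring B] [Algebra R B]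

noncomputable def hexagonMulA (τ : B ⊗[R] A →ₗ[R] A ⊗[R] B) : B ⊗[R] (A ⊗[R] A) →ₗ[R] A ⊗[R] B :=
  LinearMap.rTensor B (LinearMap.mul' R A) ∘ₗ
    (TensorProduct.assoc R A A B).symm.toLinearMap ∘ₗ
    LinearMap.lTensor A τ ∘ₗ
    (TensorProduct.assoc R A B A).toLinearMap ∘ₗ
    LinearMap.rTensor A τ ∘ₗ
    (TensorProduct.assoc R B A A).symm.toLinearMap

noncomputable def hexagonMulB (τ : B ⊗[R] A →ₗ[R] A ⊗[R] B) : (B ⊗[R] B) ⊗[R] A →ₗ[R] A ⊗[R] B :=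
  LinearMap.lTensor A (LinearMap.mul' R B) ∘ₗ
    (TensorProduct.assoc R A B B).toLinearMap ∘ₗ
    LinearMap.rTensor B τ ∘ₗ
    (TensorProduct.assoc R B A B).symm.toLinearMap ∘ₗ
    LinearMap.lTensor B τ ∘ₗ
    (TensorProduct.assoc R B B A).toLinearMap

end Hexagon

section QuadraticTwist

open AdjoinRoot

variable {R A : Type*} [CommRing R] [Ring A] [Algebra R A] (γ : R)

local notation "𝔹" => AdjoinRoot (X ^ 2 + C γ : R[X])
local notation "ξ" => AdjoinRoot.root (X ^ 2 + C γ : R[X])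

lemma AdjoinRoot.root_mul_root_X_sq_add_C : ξ * ξ = -γ • (1 : 𝔹) := by
  have h := eval₂_root (X ^ 2 + C γ)
  simp only [eval₂_add, eval₂_pow, eval₂_X, eval₂_C] at h
  rw [neg_smul, Algebra.smul_def, mul_one, algebraMap_eq, eq_neg_iff_add_eq_zero, ← sq, h]

variable [Nontrivial R]

lemma AdjoinRoot.linearMap_ext_X_sq_add_C {M : Type*} [AddCommMonoid M] [Module R M]
    {L₁ L₂ : 𝔹 →ₗ[R] M} (h₁ : L₁ 1 = L₂ 1) (hroot : L₁ ξ = L₂ ξ) : L₁ = L₂ :=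
  linearMap_ext_one_root (monic_X_pow_add_C γ two_ne_zero) natDegree_X_pow_add_C h₁ hroot

noncomputable def quadraticTwist (f δ : A →ₗ[R] A) : 𝔹 ⊗[R] A →ₗ[R] A ⊗[R] 𝔹 :=
  lift <| (basisOneRoot (monic_X_pow_add_C γ two_ne_zero) natDegree_X_pow_add_C).constr R
    ![(TensorProduct.mk R A 𝔹).flip 1,
      (TensorProduct.mk R A 𝔹).flip 1 ∘ₗ δ + (TensorProduct.mk R A 𝔹).flip ξ ∘ₗ f]

variable (f δ : A →ₗ[R] A)

@[simp] lemma quadraticTwist_one_tmul (a : A) : quadraticTwist γ f δ (1 ⊗ₜ a) = a ⊗ₜ 1 := by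
  rw [quadraticTwist, ← basisOneRoot_zero (monic_X_pow_add_C γ two_ne_zero) natDegree_X_pow_add_C,
    lift.tmul, Module.Basis.constr_basis]
  rfl

@[simp] lemma quadraticTwist_root_tmul (a : A) :
    quadraticTwist γ f δ (ξ ⊗ₜ a) = δ a ⊗ₜ 1 + f a ⊗ₜ ξ := by
  rw [quadraticTwist, ← basisOneRoot_one (monic_X_pow_add_C γ two_ne_zero) natDegree_X_pow_add_C,
    lift.tmul, Module.Basis.constr_basis]
  rfl

lemma quadraticTwist_tmul_one {f : A →ₐ[R] A} (hδ : δ 1 = 0) (b : 𝔹) :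
    quadraticTwist γ f δ (b ⊗ₜ 1) = 1 ⊗ₜ b := by
  have hflip : quadraticTwist γ f δ ∘ₗ (TensorProduct.mk R 𝔹 A).flip 1 = TensorProduct.mk R A 𝔹 1 :=
    linearMap_ext_X_sq_add_C γ (by simp) (by simp [hδ])
  exact LinearMap.congr_fun hflip b

lemma quadraticTwist_comp_lTensor_mul' {f : A →ₐ[R] A}
    (hδ : ∀ a b : A, δ (a * b) = δ a * b + f a * δ b) :
    quadraticTwist γ f δ ∘ₗ LinearMap.lTensor 𝔹 (LinearMap.mul' R A) =
      hexagonMulA (quadraticTwist γ f δ) := by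
  refine ext <| linearMap_ext_X_sq_add_C γ ?_ ?_ <;> refine ext' fun a b => ?_
  · simp [hexagonMulA]
  · simp [hexagonMulA, hδ, add_tmul, tmul_add, add_assoc]

lemma hexagonMulB_root_root_iff (τ : 𝔹 ⊗[R] A →ₗ[R] A ⊗[R] 𝔹)
    (hone : ∀ a : A, τ (1 ⊗ₜ a) = a ⊗ₜ 1) (hroot : ∀ a : A, τ (ξ ⊗ₜ a) = δ a ⊗ₜ 1 + f a ⊗ₜ ξ)
    (a : A) :
    (τ ∘ₗ LinearMap.rTensor A (LinearMap.mul' R 𝔹)) ((ξ ⊗ₜ ξ) ⊗ₜ a) =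
        hexagonMulB τ ((ξ ⊗ₜ ξ) ⊗ₜ a) ↔
      δ (δ a) = γ • (f (f a) - a) ∧ f (δ a) + δ (f a) = 0 := by
  have hlhs : (τ ∘ₗ LinearMap.rTensor A (LinearMap.mul' R 𝔹)) ((ξ ⊗ₜ ξ) ⊗ₜ a) =
      (-γ • a) ⊗ₜ 1 + (0 : A) ⊗ₜ ξ := by
    simp only [LinearMap.comp_apply, LinearMap.rTensor_tmul, LinearMap.mul'_apply,
      root_mul_root_X_sq_add_C, ← smul_tmul', map_smul, hone, zero_tmul, add_zero]
  have hrhs : hexagonMulB τ ((ξ ⊗ₜ ξ) ⊗ₜ a) =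
      (δ (δ a) - γ • f (f a)) ⊗ₜ 1 + (f (δ a) + δ (f a)) ⊗ₜ ξ := by
    simp [hexagonMulB, hroot, tmul_add, add_tmul, root_mul_root_X_sq_add_C, tmul_neg, tmul_smul,
      smul_tmul', sub_tmul]
    abel
  rw [hlhs, hrhs, tmul_one_add_tmul_root_inj (monic_X_pow_add_C γ two_ne_zero)
    natDegree_X_pow_add_C, eq_comm (a := (0 : A)), smul_sub, neg_smul]
  exact and_congr_left' ⟨fun h => by linear_combination (norm := module) -h,
    fun h => by linear_combination (norm := module) -h⟩

lemma quadraticTwist_comp_rTensor_mul' (hsq : ∀ a, δ (δ a) = γ • (f (f a) - a))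
    (hanti : ∀ a, f (δ a) + δ (f a) = 0) :
    quadraticTwist γ f δ ∘ₗ LinearMap.rTensor A (LinearMap.mul' R 𝔹) =
      hexagonMulB (quadraticTwist γ f δ) := by
  refine ext <| ext <| linearMap_ext_X_sq_add_C γ (linearMap_ext_X_sq_add_C γ ?_ ?_)
    (linearMap_ext_X_sq_add_C γ ?_ ?_) <;> refine LinearMap.ext fun a => ?_
  iterate 3 simp [hexagonMulB, tmul_add, add_tmul]
  exact (hexagonMulB_root_root_iff γ f δ _ (quadraticTwist_one_tmul γ f δ)
    (quadraticTwist_root_tmul γ f δ) a).mpr ⟨hsq a, hanti a⟩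

end QuadraticTwist

theorem stmt1_general {k A : Type*} [Field k] [Ring A] [Algebra k A] (γ : k)
    (f : A →ₐ[k] A) (δ : A →ₗ[k] A)
    (hδ : ∀ a b : A, δ (a * b) = δ a * b + f a * δ b) :
    (∃ τ : Bg k γ ⊗[k] A →ₗ[k] A ⊗[k] Bg k γ,
      (∀ a : A,
        τ (AdjoinRoot.root (X ^ 2 + C γ) ⊗ₜ a) =
          δ a ⊗ₜ (1 : Bg k γ) + f a ⊗ₜ AdjoinRoot.root (X ^ 2 + C γ)) ∧
      -- hexagon condition for the multiplication of A
      (τ ∘ₗ LinearMap.lTensor (Bg k γ) (LinearMap.mul' k A) =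
        LinearMap.rTensor (Bg k γ) (LinearMap.mul' k A) ∘ₗ
          (TensorProduct.assoc k A A (Bg k γ)).symm.toLinearMap ∘ₗ
          LinearMap.lTensor A τ ∘ₗ
          (TensorProduct.assoc k A (Bg k γ) A).toLinearMap ∘ₗ
          LinearMap.rTensor A τ ∘ₗ
          (TensorProduct.assoc k (Bg k γ) A A).symm.toLinearMap) ∧
      -- hexagon condition for the multiplication of B
      (τ ∘ₗ LinearMap.rTensor A (LinearMap.mul' k (Bg k γ)) =
        LinearMap.lTensor A (LinearMap.mul' k (Bg k γ)) ∘ₗ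
          (TensorProduct.assoc k A (Bg k γ) (Bg k γ)).toLinearMap ∘ₗ
          LinearMap.rTensor (Bg k γ) τ ∘ₗ
          (TensorProduct.assoc k (Bg k γ) A (Bg k γ)).symm.toLinearMap ∘ₗ
          LinearMap.lTensor (Bg k γ) τ ∘ₗ
          (TensorProduct.assoc k (Bg k γ) (Bg k γ) A).toLinearMap) ∧
      -- unitality
      (∀ a : A, τ ((1 : Bg k γ) ⊗ₜ a) = a ⊗ₜ (1 : Bg k γ)) ∧
      (∀ b : Bg k γ, τ (b ⊗ₜ (1 : A)) = (1 : A) ⊗ₜ b)) ↔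
    ((∀ a : A, δ (δ a) = γ • (f (f a) - a)) ∧ (∀ a : A, f (δ a) + δ (f a) = 0)) := by
  constructor
  · rintro ⟨τ, hroot, -, hmulB, hone, -⟩
    exact forall_and.mp fun a =>
      (hexagonMulB_root_root_iff γ f.toLinearMap δ τ hone hroot a).mp (LinearMap.congr_fun hmulB _)
  · rintro ⟨hsq, hanti⟩
    have hδ_one : δ 1 = 0 := by simpa using hδ 1 1
    exact ⟨quadraticTwist γ f.toLinearMap δ, quadraticTwist_root_tmul γ _ δ,
      quadraticTwist_comp_lTensor_mul' γ δ hδ, quadraticTwist_comp_rTensor_mul' γ _ δ hsq hanti,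
      quadraticTwist_one_tmul γ _ δ, quadraticTwist_tmul_one γ δ hδ_one⟩

/-- If `char k ≠ 2` and `B = k[x]/(x² + γ)`, then a pair `(f, δ)`, with `f` an algebra
endomorphism of `A` and `δ` a left `f`-derivation, defines a (unital) twisting map
`B ⊗ A → A ⊗ B` via `τ(x ⊗ a) = δ(a) ⊗ 1 + f(a) ⊗ x` if, and only if,
`δ² = γ(f² − id)` and `fδ + δf = 0`. -/
theorem stmt1 {k A : Type*} [Field k] [Ring A] [Algebra k A] (h2 : (2 : k) ≠ 0) (γ : k)
    (f : A →ₐ[k] A) (δ : A →ₗ[k] A)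
    (hδ : ∀ a b : A, δ (a * b) = δ a * b + f a * δ b) :
    (∃ τ : Bg k γ ⊗[k] A →ₗ[k] A ⊗[k] Bg k γ,
      (∀ a : A,
        τ (AdjoinRoot.root (X ^ 2 + C γ) ⊗ₜ a) =
          δ a ⊗ₜ (1 : Bg k γ) + f a ⊗ₜ AdjoinRoot.root (X ^ 2 + C γ)) ∧
      -- hexagon condition for the multiplication of A
      (τ ∘ₗ LinearMap.lTensor (Bg k γ) (LinearMap.mul' k A) =
        LinearMap.rTensor (Bg k γ) (LinearMap.mul' k A) ∘ₗ
          (TensorProduct.assoc k A A (Bg k γ)).symm.toLinearMap ∘ₗ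
          LinearMap.lTensor A τ ∘ₗ
          (TensorProduct.assoc k A (Bg k γ) A).toLinearMap ∘ₗ
          LinearMap.rTensor A τ ∘ₗ
          (TensorProduct.assoc k (Bg k γ) A A).symm.toLinearMap) ∧
      -- hexagon condition for the multiplication of B
      (τ ∘ₗ LinearMap.rTensor A (LinearMap.mul' k (Bg k γ)) =
        LinearMap.lTensor A (LinearMap.mul' k (Bg k γ)) ∘ₗ
          (TensorProduct.assoc k A (Bg k γ) (Bg k γ)).toLinearMap ∘ₗ
          LinearMap.rTensor (Bg k γ) τ ∘ₗ
          (TensorProduct.assoc k (Bg k γ) A (Bg k γ)).symm.toLinearMap ∘ₗ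
          LinearMap.lTensor (Bg k γ) τ ∘ₗ
          (TensorProduct.assoc k (Bg k γ) (Bg k γ) A).toLinearMap) ∧
      -- unitality
      (∀ a : A, τ ((1 : Bg k γ) ⊗ₜ a) = a ⊗ₜ (1 : Bg k γ)) ∧
      (∀ b : Bg k γ, τ (b ⊗ₜ (1 : A)) = (1 : A) ⊗ₜ b)) ↔
    ((∀ a : A, δ (δ a) = γ • (f (f a) - a)) ∧ (∀ a : A, f (δ a) + δ (f a) = 0)) :=
  stmt1_general γ f δ hδ
end

section
/- Let A ⊗_{(f,δ)} B be a quantum duplicate of A, with B = k[x]/(p(x)) and twisting map given by the pair (f, δ). An algebra endomorphism φ of A lifts to an algebra endomorphism φ̃ of A ⊗_{(f,δ)} B defined by φ̃(a ⊗ b) = φ(a) ⊗ b if and only if fφ = φf and δφ = φδ. -/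
/-!
Every element of `X` is uniquely `ι a + ι b * x`, so `X` is a copy of `A × A` on which the
relations `x * ι a = ι (f a) * x + ι (δ a)` and `x * x = α • x - β • 1` express the
coordinates of a product through the ring operations of `A`, `f`, `δ`, `α` and `β` alone.
If `φ` commutes with `f` and `δ`, applying `φ` coordinatewise therefore respects this product
and is an algebra map. Conversely a lift fixes `x`, and
applying it to `x * ι a` and comparing coordinates gives `f (φ a) = φ (f a)` and
`δ (φ a) = φ (δ a)`.
-/

namespace TwistedDuplicate

variable {k A X : Type*} [CommSemiring k] [Ring A] [Algebra k A] [Ring X] [Algebra k X]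

def normalForm (ι : A →ₐ[k] X) (x : X) : A × A →ₗ[k] X :=
  ι.toLinearMap.coprod (LinearMap.mulRight k x ∘ₗ ι.toLinearMap)

@[simp]
theorem normalForm_apply (ι : A →ₐ[k] X) (x : X) (p : A × A) :
    normalForm ι x p = ι p.1 + ι p.2 * x :=
  rfl

def twistedMul (f δ : A → A) (α β : k) (p q : A × A) : A × A :=
  (p.1 * q.1 + p.2 * δ q.1 - β • (p.2 * f q.2),
    p.1 * q.2 + p.2 * f q.1 + p.2 * δ q.2 + α • (p.2 * f q.2))

theorem normalForm_mul {f δ : A → A} {α β : k} {ι : A →ₐ[k] X} {x : X}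
    (hx : x * x = α • x - β • (1 : X)) (hrel : ∀ a : A, x * ι a = ι (f a) * x + ι (δ a))
    (p q : A × A) :
    normalForm ι x p * normalForm ι x q = normalForm ι x (twistedMul f δ α β p q) := by
  obtain ⟨a, b⟩ := p
  obtain ⟨c, d⟩ := q
  have hxdx : x * (ι d * x) = ι (f d) * (α • x - β • 1) + ι (δ d) * x := by
    rw [← mul_assoc, hrel, add_mul, mul_assoc, hx]
  simp only [normalForm_apply, twistedMul, map_add, map_sub, map_mul, map_smul, add_mul,
    mul_add]
  rw [mul_assoc (ι b) x (ι c), hrel, mul_assoc (ι b) x, hxdx]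
  simp only [mul_add, mul_sub, mul_smul_comm, smul_mul_assoc, mul_one, mul_assoc]
  abel

theorem twistedMul_map {f δ : A → A} {α β : k} (φ : A →ₐ[k] A)
    (hf : ∀ a : A, f (φ a) = φ (f a)) (hd : ∀ a : A, δ (φ a) = φ (δ a)) (p q : A × A) :
    twistedMul f δ α β (Prod.map φ φ p) (Prod.map φ φ q) =
      Prod.map φ φ (twistedMul f δ α β p q) := by
  simp only [twistedMul, Prod.map, map_add, map_sub, map_mul, map_smul, hf, hd]

theorem exists_lift_of_commute {f δ : A → A} {α β : k} {ι : A →ₐ[k] X} {x : X}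
    (hx : x * x = α • x - β • (1 : X)) (hrel : ∀ a : A, x * ι a = ι (f a) * x + ι (δ a))
    (hbij : Function.Bijective (normalForm ι x)) (φ : A →ₐ[k] A)
    (hf : ∀ a : A, f (φ a) = φ (f a)) (hd : ∀ a : A, δ (φ a) = φ (δ a)) :
    ∃ Φ : X →ₐ[k] X, ∀ a b : A, Φ (ι a + ι b * x) = ι (φ a) + ι (φ b) * x := by
  set e := LinearEquiv.ofBijective (normalForm ι x) hbij
  let Φ : X →ₗ[k] X :=
    normalForm ι x ∘ₗ φ.toLinearMap.prodMap φ.toLinearMap ∘ₗ e.symm.toLinearMap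
  have hΦ (p : A × A) : Φ (normalForm ι x p) = normalForm ι x (Prod.map φ φ p) := by
    simp only [Φ, LinearMap.comp_apply, LinearEquiv.coe_coe]
    rw [show normalForm ι x p = e p from rfl, e.symm_apply_apply]
    rfl
  have hΦ_one : Φ 1 = 1 := by
    simpa using hΦ (1, 0)
  have hΦ_mul (w v : X) : Φ (w * v) = Φ w * Φ v := by
    obtain ⟨p, rfl⟩ := hbij.2 w
    obtain ⟨q, rfl⟩ := hbij.2 v
    rw [normalForm_mul hx hrel, hΦ, hΦ, hΦ, normalForm_mul hx hrel, twistedMul_map φ hf hd]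
  exact ⟨AlgHom.ofLinearMap Φ hΦ_one hΦ_mul, fun a b => hΦ (a, b)⟩

theorem commute_of_lift {f δ : A → A} {ι : A →ₐ[k] X} {x : X}
    (hrel : ∀ a : A, x * ι a = ι (f a) * x + ι (δ a))
    (hinj : Function.Injective (normalForm ι x)) (φ : A →ₐ[k] A) (Φ : X →ₐ[k] X)
    (hΦ : ∀ a b : A, Φ (ι a + ι b * x) = ι (φ a) + ι (φ b) * x) :
    (∀ a : A, f (φ a) = φ (f a)) ∧ (∀ a : A, δ (φ a) = φ (δ a)) := by
  have hΦι (a : A) : Φ (ι a) = ι (φ a) := by simpa using hΦ a 0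
  have hΦx : Φ x = x := by simpa using hΦ 0 1
  have hx_mul (a : A) : x * ι a = normalForm ι x (δ a, f a) := by
    rw [hrel, normalForm_apply, add_comm]
  have hcoord (a : A) : (δ (φ a), f (φ a)) = (φ (δ a), φ (f a)) := by
    apply hinj
    rw [← hx_mul, ← hΦx, ← hΦι, ← map_mul, hx_mul, normalForm_apply, map_add, map_mul, hΦι,
      hΦι, hΦx, normalForm_apply]
  exact ⟨fun a => congrArg Prod.snd (hcoord a), fun a => congrArg Prod.fst (hcoord a)⟩

end TwistedDuplicate

/-- `A ⊗_{(f,δ)} B` is presented as a `k`-algebra `X` containing `A` via `ι` and an element `x`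
with `x² = αx − β`, `x·ι(a) = ι(f a)·x + ι(δ a)`, in which every element is uniquely of the form
`ι(a) + ι(b)·x`. -/
theorem stmt4_general {k A X : Type*} [Field k] [Ring A] [Algebra k A] [Ring X] [Algebra k X]
    (α β : k) (f : A →ₐ[k] A) (δ : A →ₗ[k] A)
    (ι : A →ₐ[k] X) (x : X)
    (hx : x * x = α • x - β • (1 : X))
    (hrel : ∀ a : A, x * ι a = ι (f a) * x + ι (δ a))
    (hbasis : ∀ w : X, ∃! c : A × A, w = ι c.1 + ι c.2 * x)
    (φ : A →ₐ[k] A) :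
    (∃ Φ : X →ₐ[k] X, ∀ a b : A, Φ (ι a + ι b * x) = ι (φ a) + ι (φ b) * x) ↔
      ((∀ a : A, f (φ a) = φ (f a)) ∧ (∀ a : A, δ (φ a) = φ (δ a))) := by
  have hbij : Function.Bijective (TwistedDuplicate.normalForm ι x) :=
    (Function.bijective_iff_existsUnique _).2 fun w => by simpa only [TwistedDuplicate.normalForm_apply, eq_comm] using hbasis w
  constructor
  · rintro ⟨Φ, hΦ⟩
    exact TwistedDuplicate.commute_of_lift hrel hbij.1 φ Φ hΦ
  · rintro ⟨hf, hd⟩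
    exact TwistedDuplicate.exists_lift_of_commute hx hrel hbij φ hf hd

/-- Let `A ⊗_{(f,δ)} B` be a quantum duplicate of `A`, with `B = k[x]/(x² − αx + β)` and
twisting map given by the pair `(f, δ)` — presented here as a `k`-algebra `X` containing `A`
via `ι` and an element `x` with `x² = αx − β`, `x·ι(a) = ι(f a)·x + ι(δ a)`, in which every
element is uniquely of the form `ι(a) + ι(b)·x`.  An algebra endomorphism `φ` of `A` lifts to
an algebra endomorphism `Φ` of `X` with `Φ(ι(a) + ι(b)x) = ι(φ a) + ι(φ b)x` if, and only if,
`fφ = φf` and `δφ = φδ`. -/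
theorem stmt4 {k A X : Type*} [Field k] [Ring A] [Algebra k A] [Ring X] [Algebra k X]
    (α β : k) (f : A →ₐ[k] A) (δ : A →ₗ[k] A)
    (hδ : ∀ a b : A, δ (a * b) = δ a * b + f a * δ b)
    (hc1 : ∀ a : A, δ (δ a) - α • δ a + β • a = β • f (f a))
    (hc2 : ∀ a : A, f (δ a) + δ (f a) = α • (f a - f (f a)))
    (ι : A →ₐ[k] X) (x : X)
    (hx : x * x = α • x - β • (1 : X))
    (hrel : ∀ a : A, x * ι a = ι (f a) * x + ι (δ a))
    (hbasis : ∀ w : X, ∃! c : A × A, w = ι c.1 + ι c.2 * x)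
    (φ : A →ₐ[k] A) :
    (∃ Φ : X →ₐ[k] X, ∀ a b : A, Φ (ι a + ι b * x) = ι (φ a) + ι (φ b) * x) ↔
      ((∀ a : A, f (φ a) = φ (f a)) ∧ (∀ a : A, δ (φ a) = φ (δ a))) :=
  stmt4_general α β f δ ι x hx hrel hbasis φ
end

section
/- For the round-trip quiver colored by (a, b) with a + b = −α, if q(a) ≠ 0 and q(b) ≠ 0 (where q(x) = x² + αx + β), then the twisted tensor product k² ⊗_{(f,δ)} k[x]/(x²−αx+β) is isomorphic as a k-algebra to M₂(k), the algebra of 2×2 matrices over k. -/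
/-!
With `u = e₁ x e₂` and `v = e₂ x e₁` (both square-zero since `e₁, e₂` are orthogonal), the
Peirce decomposition and `x² = αx − β` give `uv = −q(a) e₁` and `vu = −q(b) e₂`, and
`q(a) = q(b)` because `a + b = −α`. So `u` and `w = −q(a)⁻¹ v` satisfy `u² = w² = 0`,
`uw + wu = 1`, which defines an algebra map `M₂(k) → X`. It is injective since `M₂(k)` is
simple, and surjective since its image contains `e₁ = uw`, `e₂ = wu` and
`eᵢx = eᵢxe₁ + eᵢxe₂`.
-/

section SquareZeroPair

variable {R A : Type*} [CommRing R] [Ring A] [Algebra R A] {u w : A}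

theorem mul_mul_eq_left_of_sqZero (hu : u * u = 0) (huw : u * w + w * u = 1) :
    u * (w * u) = u := by
  simpa [mul_add, ← mul_assoc, hu] using congrArg (u * ·) huw

/-- `u`, `w`, `u * w`, `w * u` satisfy the relations of the matrix units `E₀₁, E₁₀, E₀₀, E₁₁`. -/
def Matrix.fin2AlgHomOfSqZero (hu : u * u = 0) (hw : w * w = 0) (huw : u * w + w * u = 1) :
    Matrix (Fin 2) (Fin 2) R →ₐ[R] A :=
  AlgHom.ofLinearMap
    (Matrix.liftLinear R fun i j => LinearMap.toSpanSingleton R A (!![u * w, u; w, w * u] i j))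
    (by simp [Matrix.liftLinear_apply, Fin.sum_univ_two, huw])
    (by
      have huwu : u * (w * u) = u := mul_mul_eq_left_of_sqZero hu huw
      have hwuw : w * (u * w) = w := mul_mul_eq_left_of_sqZero hw (by rwa [add_comm])
      have huu (y : A) : u * (u * y) = 0 := by rw [← mul_assoc, hu, zero_mul]
      have hww (y : A) : w * (w * y) = 0 := by rw [← mul_assoc, hw, zero_mul]
      intro M N
      simp only [Matrix.liftLinear_apply, Fin.sum_univ_two, LinearMap.toSpanSingleton_apply,
        Matrix.mul_apply, Matrix.of_apply, Matrix.cons_val', Matrix.cons_val_zero,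
        Matrix.cons_val_one, Matrix.empty_val', Matrix.cons_val_fin_one]
      simp only [add_mul, mul_add, smul_mul_smul_comm, mul_assoc, hu, hw, huwu, hwuw, huu, hww,
        mul_zero, smul_zero, add_smul, mul_smul]
      module)

@[simp]
theorem Matrix.fin2AlgHomOfSqZero_single (hu : u * u = 0) (hw : w * w = 0)
    (huw : u * w + w * u = 1) (i j : Fin 2) (r : R) :
    Matrix.fin2AlgHomOfSqZero hu hw huw (Matrix.single i j r) = r • !![u * w, u; w, w * u] i j := by
  simp [Matrix.fin2AlgHomOfSqZero]

end SquareZeroPair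

theorem Nontrivial.of_existsUnique_eq {C M : Type*} [Nontrivial C] {f : C → M} {y : M}
    (h : ∃! c, y = f c) : Nontrivial M := by
  by_contra hM
  rw [not_nontrivial_iff_subsingleton] at hM
  obtain ⟨c, -, huniq⟩ := h
  obtain ⟨c', hc'⟩ := exists_ne c
  exact hc' (huniq c' (Subsingleton.elim _ _))

theorem Subalgebra.mem_of_mul_mem_of_add_eq_one {R A : Type*} [CommSemiring R] [Semiring A]
    [Algebra R A] (S : Subalgebra R A) {e₁ e₂ y : A} (hsum : e₁ + e₂ = 1) (h₁ : y * e₁ ∈ S)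
    (h₂ : y * e₂ ∈ S) : y ∈ S := by
  simpa [← mul_add, hsum] using S.add_mem h₁ h₂

theorem mul_mul_eq_smul_of_mul_eq {k A : Type*} [CommSemiring k] [Semiring A] [Algebra k A]
    {e₁ e₂ x y : A} {s t : k} (h11 : e₁ * e₁ = e₁) (h12 : e₁ * e₂ = 0)
    (hx : x * e₁ = s • e₁ + (t • e₂ + e₂ * y)) : e₁ * x * e₁ = s • e₁ := by
  rw [mul_assoc, hx, mul_add, mul_add, mul_smul_comm, mul_smul_comm, h11, h12, ← mul_assoc, h12]
  simp

theorem corner_mul_corner {k A : Type*} [CommRing k] [Ring A] [Algebra k A] {e₁ e₂ x : A}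
    {α β t : k} (hsum : e₁ + e₂ = 1) (h11 : e₁ * e₁ = e₁) (h22 : e₂ * e₂ = e₂)
    (hxx : x * x = α • x - β • 1) (ht : e₁ * x * e₁ = t • e₁) :
    e₁ * x * e₂ * (e₂ * x * e₁) = -(t ^ 2 - α * t + β) • e₁ := by
  have he₂ : e₂ = 1 - e₁ := eq_sub_of_add_eq' hsum
  calc e₁ * x * e₂ * (e₂ * x * e₁) = e₁ * x * (e₂ * e₂) * x * e₁ := by noncomm_ring
    _ = e₁ * (x * x) * e₁ - e₁ * x * e₁ * x * e₁ := by rw [h22, he₂]; noncomm_ring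
    _ = -(t ^ 2 - α * t + β) • e₁ := by
        rw [ht, hxx, smul_mul_assoc, smul_mul_assoc, ht]
        simp only [mul_sub, sub_mul, mul_smul_comm, smul_mul_assoc, mul_one, h11, ht]
        module

theorem stmt6_general {k : Type*} [Field k] (α β a b : k) (hab : a + b = -α)
    (hqa : a ^ 2 + α * a + β ≠ 0)
    (X : Type*) [Ring X] [Algebra k X] (e₁ e₂ x : X)
    (h12 : e₁ * e₂ = 0) (h21 : e₂ * e₁ = 0) (h11 : e₁ * e₁ = e₁) (h22 : e₂ * e₂ = e₂)
    (hsum : e₁ + e₂ = 1)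
    (hxx : x * x = α • x - β • (1 : X))
    (hxe₁ : x * e₁ = -(a • e₁) + b • e₂ + e₂ * x)
    (hxe₂ : x * e₂ = a • e₁ - b • e₂ + e₁ * x)
    (hbasis : ∀ w : X, ∃! c : k × k × k × k,
      w = c.1 • e₁ + c.2.1 • e₂ + c.2.2.1 • (e₁ * x) + c.2.2.2 • (e₂ * x)) :
    Nonempty (X ≃ₐ[k] Matrix (Fin 2) (Fin 2) k) := by
  have hx₁ : e₁ * x * e₁ = (-a) • e₁ :=
    mul_mul_eq_smul_of_mul_eq h11 h12 (by rw [hxe₁, neg_smul, add_assoc])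
  have hx₂ : e₂ * x * e₂ = (-b) • e₂ :=
    mul_mul_eq_smul_of_mul_eq h22 h21 (by rw [hxe₂, neg_smul]; abel)
  set c := -(a ^ 2 + α * a + β)
  have huv : e₁ * x * e₂ * (e₂ * x * e₁) = c • e₁ := by
    convert corner_mul_corner hsum h11 h22 hxx hx₁ using 2; ring
  have hvu : e₂ * x * e₁ * (e₁ * x * e₂) = c • e₂ := by
    convert corner_mul_corner (add_comm e₁ e₂ ▸ hsum) h22 h11 hxx hx₂ using 2
    linear_combination (b - a) * hab
  set u := e₁ * x * e₂
  set w := c⁻¹ • (e₂ * x * e₁)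
  have hc : c ≠ 0 := neg_ne_zero.mpr hqa
  have huw : u * w = e₁ := by rw [mul_smul_comm, huv, inv_smul_smul₀ hc]
  have hwu : w * u = e₂ := by rw [smul_mul_assoc, hvu, inv_smul_smul₀ hc]
  have hu : u * u = 0 := by simp [u, mul_assoc, ← mul_assoc e₂, h21]
  have hw : w * w = 0 := by simp [w, mul_assoc, ← mul_assoc e₁, h12]
  set φ := Matrix.fin2AlgHomOfSqZero (R := k) hu hw (by rw [huw, hwu, hsum])
  have : Nontrivial X := Nontrivial.of_existsUnique_eq (hbasis 0)
  have hsurj : Function.Surjective φ := by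
    have hu_mem : u ∈ φ.range := ⟨Matrix.single 0 1 1, by simp [φ]⟩
    have hw_mem : w ∈ φ.range := ⟨Matrix.single 1 0 1, by simp [φ]⟩
    have he₁ : e₁ ∈ φ.range := huw ▸ mul_mem hu_mem hw_mem
    have he₂ : e₂ ∈ φ.range := hwu ▸ mul_mem hw_mem hu_mem
    have h₁x : e₁ * x ∈ φ.range := φ.range.mem_of_mul_mem_of_add_eq_one hsum
      (hx₁ ▸ φ.range.smul_mem he₁ _) hu_mem
    have h₂x : e₂ * x ∈ φ.range := φ.range.mem_of_mul_mem_of_add_eq_one hsum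
      (by simpa [w, hc] using φ.range.smul_mem hw_mem c) (hx₂ ▸ φ.range.smul_mem he₂ _)
    intro y
    obtain ⟨_, rfl, -⟩ := hbasis y
    exact add_mem (add_mem (add_mem (φ.range.smul_mem he₁ _) (φ.range.smul_mem he₂ _))
      (φ.range.smul_mem h₁x _)) (φ.range.smul_mem h₂x _)
  exact ⟨(AlgEquiv.ofBijective φ ⟨φ.toRingHom.injective, hsurj⟩).symm⟩

/-- For the round-trip quiver colored by `(a, b)` with `a + b = −α`: if `q(a) ≠ 0` and
`q(b) ≠ 0` (where `q(x) = x² + αx + β`), then the twisted tensor product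
`k² ⊗_{(f,δ)} k[x]/(x² − αx + β)` — presented here as a `k`-algebra `X` with orthogonal
idempotents `e₁, e₂` summing to `1`, an element `x` with `x² = αx − β`, the twisted
commutation relations coming from `(f, δ)`, and basis `{e₁, e₂, e₁x, e₂x}` — is isomorphic
to the matrix algebra `M₂(k)`. -/
theorem stmt6 {k : Type*} [Field k] (α β a b : k) (hab : a + b = -α)
    (hqa : a ^ 2 + α * a + β ≠ 0) (hqb : b ^ 2 + α * b + β ≠ 0)
    (X : Type*) [Ring X] [Algebra k X] (e₁ e₂ x : X)
    (h12 : e₁ * e₂ = 0) (h21 : e₂ * e₁ = 0) (h11 : e₁ * e₁ = e₁) (h22 : e₂ * e₂ = e₂)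
    (hsum : e₁ + e₂ = 1)
    (hxx : x * x = α • x - β • (1 : X))
    (hxe₁ : x * e₁ = -(a • e₁) + b • e₂ + e₂ * x)
    (hxe₂ : x * e₂ = a • e₁ - b • e₂ + e₁ * x)
    (hbasis : ∀ w : X, ∃! c : k × k × k × k,
      w = c.1 • e₁ + c.2.1 • e₂ + c.2.2.1 • (e₁ * x) + c.2.2.2 • (e₂ * x)) :
    Nonempty (X ≃ₐ[k] Matrix (Fin 2) (Fin 2) k) :=
  stmt6_general α β a b hab hqa X e₁ e₂ x h12 h21 h11 h22 hsum hxx hxe₁ hxe₂ hbasis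
end

section
/- For any q ∈ k, define A_q = k⟨x, y⟩/(x², y², yx − q·xy). Define X_t = k⟨x, y⟩/(x², y², yx + xy − t). Then for every t ≠ 0, the algebra X_t is isomorphic to the matrix algebra M₂(k). -/
/-!
Sending `x ↦ E₀₁` and `y ↦ t • E₁₀` respects the relations of `X_t`, since
`E₁₀ E₀₁ + E₀₁ E₁₀ = 1`. For `t ≠ 0` the image contains `E₀₁` and `E₁₀`, which generate
`M₂(k)`, so the map is onto. On the other hand the relations let one rewrite every product of
generators into the span of `1, x, y, xy`, so `dim X_t ≤ 4 = dim M₂(k)`, and a surjection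
onto a space of at least the same finite dimension is bijective.
-/

open FreeAlgebra

/-- Relations for `A_q = k⟨x,y⟩/(x², y², yx − q·xy)`. -/
inductive ARel (k : Type*) [Field k] (q : k) :
    FreeAlgebra k (Fin 2) → FreeAlgebra k (Fin 2) → Prop
  | xx : ARel k q (ι k 0 * ι k 0) 0
  | yy : ARel k q (ι k 1 * ι k 1) 0
  | yx : ARel k q (ι k 1 * ι k 0) (algebraMap k _ q * (ι k 0 * ι k 1))

/-- Relations for `X_t = k⟨x,y⟩/(x², y², yx + xy − t)`. -/
inductive XRel (k : Type*) [Field k] (t : k) :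
    FreeAlgebra k (Fin 2) → FreeAlgebra k (Fin 2) → Prop
  | xx : XRel k t (ι k 0 * ι k 0) 0
  | yy : XRel k t (ι k 1 * ι k 1) 0
  | mix : XRel k t (ι k 1 * ι k 0 + ι k 0 * ι k 1) (algebraMap k _ t)

theorem Algebra.adjoin_le_of_one_mem_of_mul_mem {R A : Type*} [CommSemiring R] [Semiring A]
    [Algebra R A] {s : Set A} {S : Submodule R A} (h1 : 1 ∈ S)
    (hmul : ∀ a ∈ s, ∀ v ∈ S, a * v ∈ S) :
    Subalgebra.toSubmodule (Algebra.adjoin R s) ≤ S := by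
  intro a ha
  suffices ∀ v ∈ S, a * v ∈ S by simpa using this 1 h1
  induction ha using Algebra.adjoin_induction with
  | mem a ha => exact hmul a ha
  | algebraMap r => intro v hv; simpa [Algebra.algebraMap_eq_smul_one] using S.smul_mem r hv
  | add a b _ _ ha hb => intro v hv; simpa [add_mul] using S.add_mem (ha v hv) (hb v hv)
  | mul a b _ _ ha hb => intro v hv; simpa [mul_assoc] using ha _ (hb v hv)

namespace Matrix

theorem one_eq_single_zero_zero_add_single_one_one {R : Type*} [Semiring R] :
    (1 : Matrix (Fin 2) (Fin 2) R) = single 0 0 1 + single 1 1 1 := by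
  ext i j
  fin_cases i <;> fin_cases j <;> simp [single]

theorem adjoin_single_zero_one_single_one_zero (R : Type*) [CommSemiring R] :
    Algebra.adjoin R {single (0 : Fin 2) (1 : Fin 2) (1 : R), single 1 0 1} = ⊤ := by
  set S := Algebra.adjoin R {single (0 : Fin 2) (1 : Fin 2) (1 : R), single 1 0 1}
  have h01 : single 0 1 1 ∈ S := Algebra.subset_adjoin (by simp)
  have h10 : single 1 0 1 ∈ S := Algebra.subset_adjoin (by simp)
  have hunit : ∀ i j, single i j (1 : R) ∈ S := by
    intro i j
    fin_cases i <;> fin_cases j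
    · simpa using S.mul_mem h01 h10
    · exact h01
    · exact h10
    · simpa using S.mul_mem h10 h01
  refine eq_top_iff.2 fun M _ => ?_
  rw [matrix_eq_sum_single M]
  refine S.sum_mem fun i _ => S.sum_mem fun j _ => ?_
  simpa [smul_single] using S.smul_mem (hunit i j) (M i j)

end Matrix

namespace XRel

variable {k : Type*} [Field k] {t : k}

variable (k t) in
noncomputable def genX : RingQuot (XRel k t) := RingQuot.mkAlgHom k (XRel k t) (ι k 0)

variable (k t) in
noncomputable def genY : RingQuot (XRel k t) := RingQuot.mkAlgHom k (XRel k t) (ι k 1)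

theorem genX_mul_genX : genX k t * genX k t = 0 := by
  rw [genX, ← map_mul, RingQuot.mkAlgHom_rel k XRel.xx, map_zero]

theorem genY_mul_genY : genY k t * genY k t = 0 := by
  rw [genY, ← map_mul, RingQuot.mkAlgHom_rel k XRel.yy, map_zero]

theorem genY_mul_genX : genY k t * genX k t = algebraMap k _ t - genX k t * genY k t := by
  rw [eq_sub_iff_add_eq, genX, genY, ← map_mul, ← map_mul, ← map_add,
    RingQuot.mkAlgHom_rel k XRel.mix, AlgHom.commutes]

theorem adjoin_genX_genY : Algebra.adjoin k {genX k t, genY k t} = ⊤ := by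
  have : {genX k t, genY k t} = RingQuot.mkAlgHom k (XRel k t) '' Set.range (ι k) := by
    ext
    simp [← Set.range_comp, Fin.exists_fin_two, genX, genY, eq_comm]
  rw [this, Algebra.adjoin_image, adjoin_range_ι, Algebra.map_top,
    AlgHom.range_eq_top]
  exact RingQuot.mkAlgHom_surjective k _

theorem span_one_genX_genY_genXY_eq_top :
    Submodule.span k (Set.range ![1, genX k t, genY k t, genX k t * genY k t]) = ⊤ := by
  set S := Submodule.span k (Set.range ![1, genX k t, genY k t, genX k t * genY k t])
  have mem : ∀ i, ![1, genX k t, genY k t, genX k t * genY k t] i ∈ S :=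
    fun i => Submodule.subset_span ⟨i, rfl⟩
  have hYXY : genY k t * (genX k t * genY k t) = t • genY k t := by
    rw [← mul_assoc, genY_mul_genX, sub_mul, mul_assoc, genY_mul_genY, mul_zero, sub_zero,
      Algebra.smul_def]
  refine top_le_iff.1 ?_
  rw [← Algebra.top_toSubmodule, ← adjoin_genX_genY]
  refine Algebra.adjoin_le_of_one_mem_of_mul_mem (mem 0) fun a ha v hv => ?_
  refine (Submodule.span_le.2 ?_ hv : v ∈ S.comap (LinearMap.mulLeft k a))
  rintro _ ⟨i, rfl⟩
  rcases ha with rfl | rfl <;> fin_cases i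
  · simpa using mem 1
  · simp [genX_mul_genX]
  · exact mem 3
  · simp [← mul_assoc, genX_mul_genX]
  · simpa using mem 2
  · simpa [genY_mul_genX, Algebra.algebraMap_eq_smul_one] using
      S.sub_mem (S.smul_mem t (mem 0)) (mem 3)
  · simp [genY_mul_genY]
  · simpa [hYXY] using S.smul_mem t (mem 2)

instance : Module.Finite k (RingQuot (XRel k t)) :=
  Module.finite_def.2 <|
    span_one_genX_genY_genXY_eq_top (k := k) (t := t) ▸ Submodule.fg_span (Set.finite_range _)

theorem finrank_le_four : Module.finrank k (RingQuot (XRel k t)) ≤ 4 := by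
  have := finrank_range_le_card (R := k) ![1, genX k t, genY k t, genX k t * genY k t]
  rwa [Set.finrank, span_one_genX_genY_genXY_eq_top, finrank_top, Fintype.card_fin] at this

noncomputable def lift {B : Type*} [Semiring B] [Algebra k B] (a b : B) (ha : a * a = 0)
    (hb : b * b = 0) (hab : b * a + a * b = algebraMap k B t) : RingQuot (XRel k t) →ₐ[k] B :=
  RingQuot.liftAlgHom k ⟨FreeAlgebra.lift k ![a, b], fun _ _ h => by cases h <;> simp [*]⟩

section lift

variable {B : Type*} [Semiring B] [Algebra k B] {a b : B} (ha : a * a = 0) (hb : b * b = 0)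
  (hab : b * a + a * b = algebraMap k B t)

@[simp]
theorem lift_genX : lift a b ha hb hab (genX k t) = a := by
  simp [lift, genX]

@[simp]
theorem lift_genY : lift a b ha hb hab (genY k t) = b := by
  simp [lift, genY]

end lift

variable (t) in
noncomputable def toMatrix : RingQuot (XRel k t) →ₐ[k] Matrix (Fin 2) (Fin 2) k :=
  lift (Matrix.single 0 1 1) (t • Matrix.single 1 0 1) (by simp) (by simp) (by
    simp [Matrix.one_eq_single_zero_zero_add_single_one_one, Algebra.algebraMap_eq_smul_one,
      add_comm])

theorem toMatrix_surjective (ht : t ≠ 0) : Function.Surjective (toMatrix t) := by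
  rw [← AlgHom.range_eq_top, eq_top_iff, ← Matrix.adjoin_single_zero_one_single_one_zero,
    Algebra.adjoin_le_iff, Set.pair_subset_iff]
  refine ⟨⟨genX k t, by simp [toMatrix]⟩, ⟨t⁻¹ • genY k t, ?_⟩⟩
  simp [toMatrix, ht]

end XRel

/-- For every `t ≠ 0`, the algebra `X_t = k⟨x,y⟩/(x², y², yx + xy − t)` is isomorphic to
the matrix algebra `M₂(k)`. -/
theorem stmt8 {k : Type*} [Field k] (t : k) (ht : t ≠ 0) :
    Nonempty (RingQuot (XRel k t) ≃ₐ[k] Matrix (Fin 2) (Fin 2) k) := by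
  have hdim : Module.finrank k (RingQuot (XRel k t)) ≤
      Module.finrank k (Matrix (Fin 2) (Fin 2) k) := by
    simpa [Module.finrank_matrix] using XRel.finrank_le_four
  exact ⟨.ofBijective (XRel.toMatrix t) (OrzechProperty.bijective_of_surjective_of_finrank_le
    (XRel.toMatrix t).toLinearMap (XRel.toMatrix_surjective ht) hdim)⟩
end

section
/- The algebras A_q = k⟨x, y⟩/(x², y², yx − q·xy) and A_h = k⟨x, y⟩/(x², y², yx − h·xy), for q, h ∈ k nonzero, are isomorphic as k-algebras if and only if q = h or q = h⁻¹. -/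
open FreeAlgebra

/-!
`A_q` has basis `1, x, y, xy`, realised below by an explicit model. An isomorphism
`A_q ≃ A_h` sends `x, y` to square-zero elements `u = b x + c y + …`, `v = b' x + c' y + …`,
and induces an isomorphism on `𝔪/𝔪²` (`𝔪` the augmentation ideal), so `b c' - c b' ≠ 0`.
Comparing the `xy`-coefficients of `u² = 0` and `vu = q uv` gives polynomial identities
which force `(h - q)(1 - qh) = 0`. Conversely, swapping `x` and `y` identifies `A_q` with
`A_{q⁻¹}`.
-/

-- The hypotheses are the `xy`-coefficients of `u² = 0` and `vu = q uv` in `A_h`, for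
-- `u = b x + c y + …` and `v = b' x + c' y + …`.
lemma eq_or_eq_inv_of_det_ne_zero {K : Type*} [Field K] {q h b c b' c' : K}
    (hdet : b * c' - c * b' ≠ 0) (hu : b * c + h * (c * b) = 0)
    (huv : b' * c + h * (c' * b) = q * (b * c' + h * (c * b'))) : q = h ∨ q = h⁻¹ := by
  have hprod : (h - q) * (1 - q * h) * (b * c' - c * b') ^ 2 = 0 := by
    linear_combination (b * c' * (1 - q * h) + c * b' * (h - q)) * huv
      - b' * c' * (1 - q) ^ 2 * (1 + h) * hu
  rcases mul_eq_zero.mp hprod with hprod | hdet0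
  · rcases mul_eq_zero.mp hprod with hq | hqh
    · exact Or.inl (sub_eq_zero.mp hq).symm
    · exact Or.inr (eq_inv_of_mul_eq_one_left (sub_eq_zero.mp hqh).symm)
  · exact absurd (pow_eq_zero_iff two_ne_zero |>.mp hdet0) hdet

/-- The element `a + b x + c y + d xy` of `A_q`. -/
@[ext]
structure Model (k : Type*) (q : k) where
  a : k
  b : k
  c : k
  d : k

namespace Model

section CommRing

variable {k : Type*} [CommRing k] {q : k}

instance : Zero (Model k q) := ⟨⟨0, 0, 0, 0⟩⟩
instance : One (Model k q) := ⟨⟨1, 0, 0, 0⟩⟩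
instance : Add (Model k q) := ⟨fun z w => ⟨z.a + w.a, z.b + w.b, z.c + w.c, z.d + w.d⟩⟩
instance : Neg (Model k q) := ⟨fun z => ⟨-z.a, -z.b, -z.c, -z.d⟩⟩
instance : Mul (Model k q) :=
  ⟨fun z w => ⟨z.a * w.a, z.a * w.b + z.b * w.a, z.a * w.c + z.c * w.a,
    z.a * w.d + z.d * w.a + z.b * w.c + q * (z.c * w.b)⟩⟩
instance : SMul k (Model k q) := ⟨fun r z => ⟨r * z.a, r * z.b, r * z.c, r * z.d⟩⟩

@[simp] lemma zero_a : (0 : Model k q).a = 0 := rfl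
@[simp] lemma zero_b : (0 : Model k q).b = 0 := rfl
@[simp] lemma zero_c : (0 : Model k q).c = 0 := rfl
@[simp] lemma zero_d : (0 : Model k q).d = 0 := rfl
@[simp] lemma one_a : (1 : Model k q).a = 1 := rfl
@[simp] lemma one_b : (1 : Model k q).b = 0 := rfl
@[simp] lemma one_c : (1 : Model k q).c = 0 := rfl
@[simp] lemma one_d : (1 : Model k q).d = 0 := rfl
@[simp] lemma add_a (z w : Model k q) : (z + w).a = z.a + w.a := rfl
@[simp] lemma add_b (z w : Model k q) : (z + w).b = z.b + w.b := rfl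
@[simp] lemma add_c (z w : Model k q) : (z + w).c = z.c + w.c := rfl
@[simp] lemma add_d (z w : Model k q) : (z + w).d = z.d + w.d := rfl
@[simp] lemma neg_a (z : Model k q) : (-z).a = -z.a := rfl
@[simp] lemma neg_b (z : Model k q) : (-z).b = -z.b := rfl
@[simp] lemma neg_c (z : Model k q) : (-z).c = -z.c := rfl
@[simp] lemma neg_d (z : Model k q) : (-z).d = -z.d := rfl
@[simp] lemma mul_a (z w : Model k q) : (z * w).a = z.a * w.a := rfl
@[simp] lemma mul_b (z w : Model k q) : (z * w).b = z.a * w.b + z.b * w.a := rfl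
@[simp] lemma mul_c (z w : Model k q) : (z * w).c = z.a * w.c + z.c * w.a := rfl
@[simp] lemma mul_d (z w : Model k q) :
    (z * w).d = z.a * w.d + z.d * w.a + z.b * w.c + q * (z.c * w.b) := rfl
@[simp] lemma smul_a (r : k) (z : Model k q) : (r • z).a = r * z.a := rfl
@[simp] lemma smul_b (r : k) (z : Model k q) : (r • z).b = r * z.b := rfl
@[simp] lemma smul_c (r : k) (z : Model k q) : (r • z).c = r * z.c := rfl
@[simp] lemma smul_d (r : k) (z : Model k q) : (r • z).d = r * z.d := rfl

instance : AddCommGroup (Model k q) where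
  add_assoc _ _ _ := by ext <;> simp only [add_a, add_b, add_c, add_d] <;> ring
  zero_add _ := by ext <;> simp
  add_zero _ := by ext <;> simp
  add_comm _ _ := by ext <;> simp only [add_a, add_b, add_c, add_d] <;> ring
  neg_add_cancel _ := by ext <;> simp
  nsmul := nsmulRec
  zsmul := zsmulRec

instance : Ring (Model k q) where
  left_distrib _ _ _ := by ext <;> simp <;> ring
  right_distrib _ _ _ := by ext <;> simp <;> ring
  zero_mul _ := by ext <;> simp
  mul_zero _ := by ext <;> simp
  mul_assoc _ _ _ := by ext <;> simp <;> ring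
  one_mul _ := by ext <;> simp
  mul_one _ := by ext <;> simp

instance : Module k (Model k q) where
  one_smul _ := by ext <;> simp
  mul_smul _ _ _ := by ext <;> simp [mul_assoc]
  smul_zero _ := by ext <;> simp
  smul_add _ _ _ := by ext <;> simp [mul_add]
  add_smul _ _ _ := by ext <;> simp [add_mul]
  zero_smul _ := by ext <;> simp

instance : Algebra k (Model k q) where
  algebraMap :=
    { toFun r := ⟨r, 0, 0, 0⟩
      map_one' := rfl
      map_mul' _ _ := by ext <;> simp
      map_zero' := rfl
      map_add' _ _ := by ext <;> simp }
  commutes' _ _ := by ext <;> simp [mul_comm]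
  smul_def' _ _ := by ext <;> simp

def X : Model k q := ⟨0, 1, 0, 0⟩
def Y : Model k q := ⟨0, 0, 1, 0⟩

lemma eq_basis_sum (z : Model k q) : z = z.a • 1 + z.b • X + z.c • Y + z.d • (X * Y) := by
  ext <;> simp [X, Y]

lemma X_mul_X : (X : Model k q) * X = 0 := by ext <;> simp [X]
lemma Y_mul_Y : (Y : Model k q) * Y = 0 := by ext <;> simp [Y]
lemma Y_mul_X : (Y : Model k q) * X = q • (X * Y) := by ext <;> simp [X, Y]

lemma mul_eq_of_a_eq_zero {z w : Model k q} (hz : z.a = 0) (hw : w.a = 0) :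
    z * w = ⟨0, 0, 0, z.b * w.c + q * (z.c * w.b)⟩ := by
  ext <;> simp [hz, hw]

section lift

variable {A : Type*} [Semiring A] [Algebra k A]

def lift (x y : A) (hxx : x * x = 0) (hyy : y * y = 0) (hyx : y * x = q • (x * y)) :
    Model k q →ₐ[k] A where
  toFun z := z.a • 1 + z.b • x + z.c • y + z.d • (x * y)
  map_one' := by simp
  map_mul' z w := by
    have hxxy : x * (x * y) = 0 := by rw [← mul_assoc, hxx, zero_mul]
    have hxyy : x * y * y = 0 := by rw [mul_assoc, hyy, mul_zero]
    have hxyx : x * y * x = 0 := by rw [mul_assoc, hyx, mul_smul_comm, hxxy, smul_zero]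
    have hyxy : y * (x * y) = 0 := by
      rw [← mul_assoc, hyx, smul_mul_assoc, mul_assoc, hyy, mul_zero, smul_zero]
    have hxyxy : x * y * (x * y) = 0 := by rw [← mul_assoc, hxyx, zero_mul]
    simp only [mul_a, mul_b, mul_c, mul_d, add_mul, mul_add, smul_mul_smul_comm, one_mul,
      mul_one, hxx, hyy, hyx, hxxy, hxyy, hxyx, hyxy, hxyxy, smul_zero, smul_smul]
    module
  map_zero' := by simp
  map_add' z w := by simp only [add_a, add_b, add_c, add_d, add_smul]; abel
  commutes' r := by simp [Algebra.algebraMap_eq_smul_one]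

end lift

section algHom

variable {h : k} {f : Model k q →ₐ[k] Model k h}

lemma map_b_of_a_eq_zero (hX : (f X).a = 0) (hY : (f Y).a = 0) (z : Model k q) :
    (f z).b = z.b * (f X).b + z.c * (f Y).b := by
  conv_lhs => rw [eq_basis_sum z]
  simp [mul_eq_of_a_eq_zero hX hY]

lemma map_c_of_a_eq_zero (hX : (f X).a = 0) (hY : (f Y).a = 0) (z : Model k q) :
    (f z).c = z.b * (f X).c + z.c * (f Y).c := by
  conv_lhs => rw [eq_basis_sum z]
  simp [mul_eq_of_a_eq_zero hX hY]

lemma det_ne_zero_of_surjective [Nontrivial k] (hf : Function.Surjective f) (hX : (f X).a = 0)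
    (hY : (f Y).a = 0) : (f X).b * (f Y).c - (f X).c * (f Y).b ≠ 0 := by
  obtain ⟨z, hz⟩ := hf X
  obtain ⟨w, hw⟩ := hf Y
  have hzb : z.b * (f X).b + z.c * (f Y).b = 1 := by rw [← map_b_of_a_eq_zero hX hY, hz]; rfl
  have hzc : z.b * (f X).c + z.c * (f Y).c = 0 := by rw [← map_c_of_a_eq_zero hX hY, hz]; rfl
  have hwc : w.b * (f X).c + w.c * (f Y).c = 1 := by rw [← map_c_of_a_eq_zero hX hY, hw]; rfl
  -- the coordinates of `z` and `w` form an inverse of the matrix of `f` on `𝔪/𝔪²`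
  refine left_ne_zero_of_mul_eq_one (b := z.b * w.c - z.c * w.b) ?_
  linear_combination (w.b * (f X).c + w.c * (f Y).c) * hzb
    - (w.b * (f X).b + w.c * (f Y).b) * hzc + hwc

end algHom

end CommRing

variable {k : Type*} [Field k] {q : k}

lemma a_eq_zero_of_mul_self_eq_zero {z : Model k q} (hz : z * z = 0) : z.a = 0 :=
  mul_self_eq_zero.mp (congrArg a hz)

theorem eq_or_eq_inv_of_algEquiv {h : k} (e : Model k q ≃ₐ[k] Model k h) : q = h ∨ q = h⁻¹ := by
  have hu : e X * e X = 0 := by rw [← map_mul, X_mul_X, map_zero]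
  have hv : e Y * e Y = 0 := by rw [← map_mul, Y_mul_Y, map_zero]
  have hvu : e Y * e X = q • (e X * e Y) := by rw [← map_mul, ← map_mul, ← map_smul, Y_mul_X]
  have hua := a_eq_zero_of_mul_self_eq_zero hu
  have hva := a_eq_zero_of_mul_self_eq_zero hv
  rw [mul_eq_of_a_eq_zero hua hua] at hu
  rw [mul_eq_of_a_eq_zero hva hua, mul_eq_of_a_eq_zero hua hva] at hvu
  exact eq_or_eq_inv_of_det_ne_zero
    (det_ne_zero_of_surjective (f := (e : Model k q →ₐ[k] Model k h)) e.surjective hua hva)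
    (congrArg d hu) (by simpa using congrArg d hvu)

end Model

namespace ARel

variable {k : Type*} [Field k] {q : k}

noncomputable def X (q : k) : RingQuot (ARel k q) := RingQuot.mkAlgHom k (ARel k q) (ι k 0)
noncomputable def Y (q : k) : RingQuot (ARel k q) := RingQuot.mkAlgHom k (ARel k q) (ι k 1)

lemma X_mul_X : X q * X q = 0 := by
  rw [X, ← map_mul, RingQuot.mkAlgHom_rel k ARel.xx, map_zero]

lemma Y_mul_Y : Y q * Y q = 0 := by
  rw [Y, ← map_mul, RingQuot.mkAlgHom_rel k ARel.yy, map_zero]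

lemma Y_mul_X : Y q * X q = q • (X q * Y q) := by
  rw [X, Y, ← map_mul, RingQuot.mkAlgHom_rel k ARel.yx, map_mul, map_mul, AlgHom.commutes,
    Algebra.smul_def]

lemma X_mul_Y (hq : q ≠ 0) : X q * Y q = q⁻¹ • (Y q * X q) := by
  rw [Y_mul_X, smul_smul, inv_mul_cancel₀ hq, one_smul]

variable {A : Type*} [Semiring A] [Algebra k A]

noncomputable def lift (q : k) (x y : A) (hxx : x * x = 0) (hyy : y * y = 0)
    (hyx : y * x = q • (x * y)) : RingQuot (ARel k q) →ₐ[k] A :=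
  RingQuot.liftAlgHom k ⟨FreeAlgebra.lift k ![x, y], fun _ _ r => by
    cases r <;> simp [hxx, hyy, hyx, Algebra.smul_def]⟩

variable {x y : A} {hxx : x * x = 0} {hyy : y * y = 0} {hyx : y * x = q • (x * y)}

@[simp] lemma lift_X : lift q x y hxx hyy hyx (X q) = x := by
  simp [lift, X]

@[simp] lemma lift_Y : lift q x y hxx hyy hyx (Y q) = y := by
  simp [lift, Y]

lemma algHom_ext {f g : RingQuot (ARel k q) →ₐ[k] A} (hX : f (X q) = g (X q))
    (hY : f (Y q) = g (Y q)) : f = g := by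
  apply RingQuot.ringQuot_ext'
  apply FreeAlgebra.hom_ext
  funext i
  fin_cases i
  exacts [hX, hY]

noncomputable def equivModel (q : k) : RingQuot (ARel k q) ≃ₐ[k] Model k q :=
  AlgEquiv.ofAlgHom (lift q Model.X Model.Y Model.X_mul_X Model.Y_mul_Y Model.Y_mul_X)
    (Model.lift (X q) (Y q) X_mul_X Y_mul_Y Y_mul_X)
    (AlgHom.ext fun z => by
      conv_rhs => rw [Model.eq_basis_sum z]
      simp [Model.lift])
    (algHom_ext (by simp [Model.lift, Model.X]) (by simp [Model.lift, Model.Y]))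

noncomputable def swapEquiv (hq : q ≠ 0) : RingQuot (ARel k q) ≃ₐ[k] RingQuot (ARel k q⁻¹) :=
  AlgEquiv.ofAlgHom
    (lift q (Y q⁻¹) (X q⁻¹) Y_mul_Y X_mul_X (by rw [X_mul_Y (inv_ne_zero hq), inv_inv]))
    (lift q⁻¹ (Y q) (X q) Y_mul_Y X_mul_X (X_mul_Y hq))
    (algHom_ext (by simp) (by simp)) (algHom_ext (by simp) (by simp))

end ARel


theorem stmt9_general {k : Type*} [Field k] (q h : k) (hh : h ≠ 0) :
    Nonempty (RingQuot (ARel k q) ≃ₐ[k] RingQuot (ARel k h)) ↔ (q = h ∨ q = h⁻¹) := by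
  constructor
  · rintro ⟨e⟩
    exact Model.eq_or_eq_inv_of_algEquiv
      ((ARel.equivModel q).symm.trans (e.trans (ARel.equivModel h)))
  · rintro (rfl | rfl)
    · exact ⟨AlgEquiv.refl⟩
    · exact ⟨(ARel.swapEquiv hh).symm⟩

/-- For nonzero `q, h ∈ k`, the algebras `A_q` and `A_h` are isomorphic as `k`-algebras
if, and only if, `q = h` or `q = h⁻¹`. -/
theorem stmt9 {k : Type*} [Field k] (q h : k) (hq : q ≠ 0) (hh : h ≠ 0) :
    Nonempty (RingQuot (ARel k q) ≃ₐ[k] RingQuot (ARel k h)) ↔ (q = h ∨ q = h⁻¹) :=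
  stmt9_general q h hh
end

section
/- A linear map yx ↦ a + bx + cy + dxy defines a twisting map τ : k[ξ] ⊗ k[ξ] → k[ξ] ⊗ k[ξ] (between two copies of the dual numbers generated by x and y with x² = y² = 0) if and only if b = c = 0 and a(1 + d) = 0. Hence every twisted tensor product k[ξ] ⊗_τ k[ξ] is isomorphic to A_q for some q ∈ k or to X_t for some t ∈ k. -/
/-!
Since τ is unital, both twisting conditions hold on every elementary tensor with a factor `1`,
so, `{1, ε}` being a basis, each condition reduces to the single tensor `ε ⊗ ε ⊗ ε`, on which
its left side vanishes because `ε² = 0`. In the basis `1⊗1, ε⊗1, 1⊗ε, ε⊗ε` its right side has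
coordinates `(ca, a + cb + da, c², 2cd)` for the first condition and `(ba, b², a + bc + da, 2bd)`
for the second, and these all vanish iff `b = c = 0` and `a(1 + d) = 0`. Then either `a = 0`,
and the relation `yx = d·xy` presents `A_d`, or `d = -1`, and `yx = a - xy` presents `X_a`.
-/

set_option maxHeartbeats 1000000

open TensorProduct DualNumber FreeAlgebra

/-- Relations for the algebra `k⟨x,y⟩/(x², y², yx − (a + bx + cy + dxy))`. -/
inductive PRel (k : Type*) [Field k] (a b c d : k) :
    FreeAlgebra k (Fin 2) → FreeAlgebra k (Fin 2) → Prop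
  | xx : PRel k a b c d (ι k 0 * ι k 0) 0
  | yy : PRel k a b c d (ι k 1 * ι k 1) 0
  | yx : PRel k a b c d (ι k 1 * ι k 0)
      (algebraMap k _ a + algebraMap k _ b * ι k 0 + algebraMap k _ c * ι k 1 +
        algebraMap k _ d * (ι k 0 * ι k 1))

section Twisting

variable {R A B : Type*} [CommSemiring R] [Semiring A] [Algebra R A] [Semiring B] [Algebra R B]

/- The right-hand sides `(μ_A ⊗ B) ∘ (A ⊗ τ) ∘ (τ ⊗ A)` and `(A ⊗ μ_B) ∘ (τ ⊗ B) ∘ (B ⊗ τ)` of the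
two twisting-map conditions on `τ : B ⊗ A → A ⊗ B`, with the associators written out. -/
noncomputable def twistMulLeft (τ : B ⊗[R] A →ₗ[R] A ⊗[R] B) :
    B ⊗[R] (A ⊗[R] A) →ₗ[R] A ⊗[R] B :=
  LinearMap.rTensor B (LinearMap.mul' R A) ∘ₗ (TensorProduct.assoc R A A B).symm.toLinearMap ∘ₗ
    LinearMap.lTensor A τ ∘ₗ (TensorProduct.assoc R A B A).toLinearMap ∘ₗ
    LinearMap.rTensor A τ ∘ₗ (TensorProduct.assoc R B A A).symm.toLinearMap

noncomputable def twistMulRight (τ : B ⊗[R] A →ₗ[R] A ⊗[R] B) :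
    (B ⊗[R] B) ⊗[R] A →ₗ[R] A ⊗[R] B :=
  LinearMap.lTensor A (LinearMap.mul' R B) ∘ₗ (TensorProduct.assoc R A B B).toLinearMap ∘ₗ
    LinearMap.rTensor B τ ∘ₗ (TensorProduct.assoc R B A B).symm.toLinearMap ∘ₗ
    LinearMap.lTensor B τ ∘ₗ (TensorProduct.assoc R B B A).toLinearMap

variable {τ : B ⊗[R] A →ₗ[R] A ⊗[R] B}

theorem twistMulLeft_one_tmul (hτ : ∀ a, τ (1 ⊗ₜ a) = a ⊗ₜ 1) (a a' : A) :
    twistMulLeft τ (1 ⊗ₜ (a ⊗ₜ a')) = (a * a') ⊗ₜ 1 := by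
  simp [twistMulLeft, hτ]

theorem twistMulLeft_tmul_one_tmul (hτ : ∀ b, τ (b ⊗ₜ 1) = 1 ⊗ₜ b) (b : B) (a : A) :
    twistMulLeft τ (b ⊗ₜ (1 ⊗ₜ a)) = τ (b ⊗ₜ a) := by
  simp only [twistMulLeft, LinearMap.comp_apply, LinearEquiv.coe_coe, assoc_symm_tmul,
    LinearMap.rTensor_tmul, hτ, assoc_tmul, LinearMap.lTensor_tmul]
  induction τ (b ⊗ₜ a) with
  | zero => simp
  | tmul a b => simp
  | add x y hx hy => simp only [tmul_add, map_add, hx, hy]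

theorem twistMulLeft_tmul_tmul_one (hτ : ∀ b, τ (b ⊗ₜ 1) = 1 ⊗ₜ b) (b : B) (a : A) :
    twistMulLeft τ (b ⊗ₜ (a ⊗ₜ 1)) = τ (b ⊗ₜ a) := by
  simp only [twistMulLeft, LinearMap.comp_apply, LinearEquiv.coe_coe, assoc_symm_tmul,
    LinearMap.rTensor_tmul]
  induction τ (b ⊗ₜ a) with
  | zero => simp
  | tmul a b => simp [hτ]
  | add x y hx hy => simp only [add_tmul, map_add, hx, hy]

theorem twistMulRight_tmul_one (hτ : ∀ b, τ (b ⊗ₜ 1) = 1 ⊗ₜ b) (b b' : B) :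
    twistMulRight τ ((b ⊗ₜ b') ⊗ₜ 1) = 1 ⊗ₜ (b * b') := by
  simp [twistMulRight, hτ]

theorem twistMulRight_tmul_one_tmul (hτ : ∀ a, τ (1 ⊗ₜ a) = a ⊗ₜ 1) (b : B) (a : A) :
    twistMulRight τ ((b ⊗ₜ 1) ⊗ₜ a) = τ (b ⊗ₜ a) := by
  simp only [twistMulRight, LinearMap.comp_apply, LinearEquiv.coe_coe, assoc_tmul,
    LinearMap.lTensor_tmul, hτ, assoc_symm_tmul, LinearMap.rTensor_tmul]
  induction τ (b ⊗ₜ a) with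
  | zero => simp
  | tmul a b => simp
  | add x y hx hy => simp only [add_tmul, map_add, hx, hy]

theorem twistMulRight_one_tmul_tmul (hτ : ∀ a, τ (1 ⊗ₜ a) = a ⊗ₜ 1) (b : B) (a : A) :
    twistMulRight τ ((1 ⊗ₜ b) ⊗ₜ a) = τ (b ⊗ₜ a) := by
  simp only [twistMulRight, LinearMap.comp_apply, LinearEquiv.coe_coe, assoc_tmul,
    LinearMap.lTensor_tmul]
  induction τ (b ⊗ₜ a) with
  | zero => simp
  | tmul a b => simp [hτ]
  | add x y hx hy => simp only [tmul_add, map_add, hx, hy]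

end Twisting

namespace DualNumber

variable (R : Type*) [CommRing R]

noncomputable def basis : Module.Basis (Fin 2) R R[ε] := Module.Basis.finTwoProd R

@[simp] theorem basis_zero : basis R 0 = 1 := Module.Basis.finTwoProd_zero R
@[simp] theorem basis_one : basis R 1 = ε := Module.Basis.finTwoProd_one R

@[simp] theorem basis_repr_apply (x : R[ε]) : ⇑((basis R).repr x) = ![x.fst, x.snd] :=
  Module.Basis.coe_finTwoProd_repr x

theorem basis_eq_one_or_eps (i : Fin 2) : basis R i = 1 ∨ basis R i = ε := by
  fin_cases i <;> simp

variable {R}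

theorem smul_tmul_add_eq_zero_iff {α β γ δ : R} :
    α • (1 ⊗ₜ[R] 1 : R[ε] ⊗[R] R[ε]) + β • (ε ⊗ₜ 1) + γ • (1 ⊗ₜ ε) + δ • (ε ⊗ₜ ε) = 0 ↔
      α = 0 ∧ β = 0 ∧ γ = 0 ∧ δ = 0 := by
  refine ⟨fun h => ?_, by rintro ⟨rfl, rfl, rfl, rfl⟩; simp⟩
  have coeff (i j : Fin 2) := congrArg (((basis R).tensorProduct (basis R)).repr · (i, j)) h
  exact ⟨by simpa using coeff 0 0, by simpa using coeff 1 0, by simpa using coeff 0 1,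
    by simpa using coeff 1 1⟩

variable {τ : R[ε] ⊗[R] R[ε] →ₗ[R] R[ε] ⊗[R] R[ε]} {a b c d : R}

theorem twist_one_tmul (h11 : τ (1 ⊗ₜ 1) = 1 ⊗ₜ 1) (h1e : τ (1 ⊗ₜ ε) = ε ⊗ₜ 1)
    (x : R[ε]) :
    τ (1 ⊗ₜ x) = x ⊗ₜ 1 :=
  LinearMap.congr_fun ((basis R).ext (f₁ := τ ∘ₗ TensorProduct.mk R _ _ 1)
    (f₂ := (TensorProduct.mk R _ _).flip 1) fun i => by fin_cases i <;> simp [h11, h1e]) x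

theorem twist_tmul_one (h11 : τ (1 ⊗ₜ 1) = 1 ⊗ₜ 1) (he1 : τ (ε ⊗ₜ 1) = 1 ⊗ₜ ε)
    (x : R[ε]) :
    τ (x ⊗ₜ 1) = 1 ⊗ₜ x :=
  LinearMap.congr_fun ((basis R).ext (f₁ := τ ∘ₗ (TensorProduct.mk R _ _).flip 1)
    (f₂ := TensorProduct.mk R _ _ 1) fun i => by fin_cases i <;> simp [h11, he1]) x


theorem twistMulLeft_eps_tmul_eps_tmul_eps (h1e : τ (1 ⊗ₜ ε) = ε ⊗ₜ 1)
    (hee : τ (ε ⊗ₜ ε) = a • (1 ⊗ₜ 1) + b • (ε ⊗ₜ 1) + c • (1 ⊗ₜ ε) + d • (ε ⊗ₜ ε)) :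
    twistMulLeft τ (ε ⊗ₜ (ε ⊗ₜ ε)) = (c * a) • (1 ⊗ₜ 1) + (a + c * b + d * a) • (ε ⊗ₜ 1) +
      (c * c) • (1 ⊗ₜ ε) + (c * d + d * c) • (ε ⊗ₜ ε) := by
  simp only [twistMulLeft, LinearMap.coe_comp, LinearEquiv.coe_coe, Function.comp_apply,
    assoc_symm_tmul, LinearMap.rTensor_tmul, hee, add_tmul, ← smul_tmul', map_add, map_smul,
    assoc_tmul, LinearMap.lTensor_tmul, h1e, tmul_add, tmul_smul, smul_add, LinearMap.mul'_apply,
    one_mul, eps_mul_eps, zero_tmul, smul_zero, add_zero, mul_one]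
  module

theorem twistMulRight_eps_tmul_eps_tmul_eps (he1 : τ (ε ⊗ₜ 1) = 1 ⊗ₜ ε)
    (hee : τ (ε ⊗ₜ ε) = a • (1 ⊗ₜ 1) + b • (ε ⊗ₜ 1) + c • (1 ⊗ₜ ε) + d • (ε ⊗ₜ ε)) :
    twistMulRight τ ((ε ⊗ₜ ε) ⊗ₜ ε) = (b * a) • (1 ⊗ₜ 1) + (b * b) • (ε ⊗ₜ 1) +
      (a + b * c + d * a) • (1 ⊗ₜ ε) + (b * d + d * b) • (ε ⊗ₜ ε) := by
  simp only [twistMulRight, LinearMap.coe_comp, LinearEquiv.coe_coe, Function.comp_apply,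
    assoc_tmul, LinearMap.lTensor_tmul, hee, tmul_add, tmul_smul, map_add, map_smul,
    assoc_symm_tmul, LinearMap.rTensor_tmul, he1, add_tmul, ← smul_tmul', smul_add,
    LinearMap.mul'_apply, mul_one, eps_mul_eps, tmul_zero, smul_zero, add_zero, one_mul]
  module

theorem comp_lTensor_mul'_eq_twistMulLeft_iff_eps (h11 : τ (1 ⊗ₜ 1) = 1 ⊗ₜ 1)
    (he1 : τ (ε ⊗ₜ 1) = 1 ⊗ₜ ε) (h1e : τ (1 ⊗ₜ ε) = ε ⊗ₜ 1) :
    τ ∘ₗ LinearMap.lTensor R[ε] (LinearMap.mul' R R[ε]) = twistMulLeft τ ↔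
      twistMulLeft τ (ε ⊗ₜ (ε ⊗ₜ ε)) = 0 := by
  refine ⟨fun h => by simpa using (LinearMap.congr_fun h (ε ⊗ₜ (ε ⊗ₜ ε))).symm, fun h => ?_⟩
  refine ((basis R).tensorProduct ((basis R).tensorProduct (basis R))).ext fun ⟨i, j, l⟩ => ?_
  simp only [Module.Basis.tensorProduct_apply, LinearMap.comp_apply, LinearMap.lTensor_tmul,
    LinearMap.mul'_apply]
  obtain hi | hi := basis_eq_one_or_eps R i <;> rw [hi]
  · rw [twistMulLeft_one_tmul (twist_one_tmul h11 h1e), twist_one_tmul h11 h1e]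
  obtain hj | hj := basis_eq_one_or_eps R j <;> rw [hj]
  · rw [one_mul, twistMulLeft_tmul_one_tmul (twist_tmul_one h11 he1)]
  obtain hl | hl := basis_eq_one_or_eps R l <;> rw [hl]
  · rw [mul_one, twistMulLeft_tmul_tmul_one (twist_tmul_one h11 he1)]
  · rw [h, eps_mul_eps, tmul_zero, map_zero]

theorem comp_rTensor_mul'_eq_twistMulRight_iff_eps (h11 : τ (1 ⊗ₜ 1) = 1 ⊗ₜ 1)
    (he1 : τ (ε ⊗ₜ 1) = 1 ⊗ₜ ε) (h1e : τ (1 ⊗ₜ ε) = ε ⊗ₜ 1) :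
    τ ∘ₗ LinearMap.rTensor R[ε] (LinearMap.mul' R R[ε]) = twistMulRight τ ↔
      twistMulRight τ ((ε ⊗ₜ ε) ⊗ₜ ε) = 0 := by
  refine ⟨fun h => by simpa using (LinearMap.congr_fun h ((ε ⊗ₜ ε) ⊗ₜ ε)).symm, fun h => ?_⟩
  refine (((basis R).tensorProduct (basis R)).tensorProduct (basis R)).ext fun ⟨⟨i, j⟩, l⟩ => ?_
  simp only [Module.Basis.tensorProduct_apply, LinearMap.comp_apply, LinearMap.rTensor_tmul,
    LinearMap.mul'_apply]
  obtain hl | hl := basis_eq_one_or_eps R l <;> rw [hl]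
  · rw [twistMulRight_tmul_one (twist_tmul_one h11 he1), twist_tmul_one h11 he1]
  obtain hj | hj := basis_eq_one_or_eps R j <;> rw [hj]
  · rw [mul_one, twistMulRight_tmul_one_tmul (twist_one_tmul h11 h1e)]
  obtain hi | hi := basis_eq_one_or_eps R i <;> rw [hi]
  · rw [one_mul, twistMulRight_one_tmul_tmul (twist_one_tmul h11 h1e)]
  · rw [h, eps_mul_eps, zero_tmul, map_zero]

variable [NoZeroDivisors R]

theorem comp_lTensor_mul'_eq_twistMulLeft_iff (h11 : τ (1 ⊗ₜ 1) = 1 ⊗ₜ 1)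
    (he1 : τ (ε ⊗ₜ 1) = 1 ⊗ₜ ε) (h1e : τ (1 ⊗ₜ ε) = ε ⊗ₜ 1)
    (hee : τ (ε ⊗ₜ ε) = a • (1 ⊗ₜ 1) + b • (ε ⊗ₜ 1) + c • (1 ⊗ₜ ε) + d • (ε ⊗ₜ ε)) :
    τ ∘ₗ LinearMap.lTensor R[ε] (LinearMap.mul' R R[ε]) = twistMulLeft τ ↔
      c = 0 ∧ a * (1 + d) = 0 := by
  rw [comp_lTensor_mul'_eq_twistMulLeft_iff_eps h11 he1 h1e,
    twistMulLeft_eps_tmul_eps_tmul_eps h1e hee, smul_tmul_add_eq_zero_iff]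
  constructor
  · rintro ⟨-, ha, hc, -⟩
    obtain rfl := mul_self_eq_zero.mp hc
    exact ⟨rfl, by linear_combination ha⟩
  · rintro ⟨rfl, ha⟩
    exact ⟨by simp, by linear_combination ha, by simp, by simp⟩

theorem comp_rTensor_mul'_eq_twistMulRight_iff (h11 : τ (1 ⊗ₜ 1) = 1 ⊗ₜ 1)
    (he1 : τ (ε ⊗ₜ 1) = 1 ⊗ₜ ε) (h1e : τ (1 ⊗ₜ ε) = ε ⊗ₜ 1)
    (hee : τ (ε ⊗ₜ ε) = a • (1 ⊗ₜ 1) + b • (ε ⊗ₜ 1) + c • (1 ⊗ₜ ε) + d • (ε ⊗ₜ ε)) :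
    τ ∘ₗ LinearMap.rTensor R[ε] (LinearMap.mul' R R[ε]) = twistMulRight τ ↔
      b = 0 ∧ a * (1 + d) = 0 := by
  rw [comp_rTensor_mul'_eq_twistMulRight_iff_eps h11 he1 h1e,
    twistMulRight_eps_tmul_eps_tmul_eps he1 hee, smul_tmul_add_eq_zero_iff]
  constructor
  · rintro ⟨-, hb, ha, -⟩
    obtain rfl := mul_self_eq_zero.mp hb
    exact ⟨rfl, by linear_combination ha⟩
  · rintro ⟨rfl, ha⟩
    exact ⟨by simp, by simp, by linear_combination ha, by simp⟩

end DualNumber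

namespace RingQuot

variable {S A : Type*} [CommSemiring S] [Semiring A] [Algebra S A] {r s : A → A → Prop}

noncomputable def algEquivOfRel (hrs : ∀ ⦃x y⦄, r x y → mkAlgHom S s x = mkAlgHom S s y)
    (hsr : ∀ ⦃x y⦄, s x y → mkAlgHom S r x = mkAlgHom S r y) : RingQuot r ≃ₐ[S] RingQuot s :=
  AlgEquiv.ofAlgHom (liftAlgHom S ⟨mkAlgHom S s, hrs⟩) (liftAlgHom S ⟨mkAlgHom S r, hsr⟩)
    (ringQuot_ext' S _ _ <| AlgHom.ext fun _ => by simp [liftAlgHom_mkAlgHom_apply])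
    (ringQuot_ext' S _ _ <| AlgHom.ext fun _ => by simp [liftAlgHom_mkAlgHom_apply])

end RingQuot

section Presentations

variable {k : Type*} [Field k]

noncomputable def prelAlgEquivARel (d : k) :
    RingQuot (PRel k 0 0 0 d) ≃ₐ[k] RingQuot (ARel k d) :=
  RingQuot.algEquivOfRel
    (by
      rintro _ _ (_ | _ | _)
      · exact RingQuot.mkAlgHom_rel k .xx
      · exact RingQuot.mkAlgHom_rel k .yy
      · simpa using RingQuot.mkAlgHom_rel k (ARel.yx (q := d)))
    (by
      rintro _ _ (_ | _ | _)
      · exact RingQuot.mkAlgHom_rel k .xx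
      · exact RingQuot.mkAlgHom_rel k .yy
      · simpa using RingQuot.mkAlgHom_rel k (PRel.yx (a := 0) (b := 0) (c := 0) (d := d)))

noncomputable def prelAlgEquivXRel (t : k) :
    RingQuot (PRel k t 0 0 (-1)) ≃ₐ[k] RingQuot (XRel k t) :=
  RingQuot.algEquivOfRel
    (by
      rintro _ _ (_ | _ | _)
      · exact RingQuot.mkAlgHom_rel k .xx
      · exact RingQuot.mkAlgHom_rel k .yy
      · have := RingQuot.mkAlgHom_rel k (XRel.mix (t := t))
        simp only [map_add] at this
        simp [← this])
    (by
      rintro _ _ (_ | _ | _)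
      · exact RingQuot.mkAlgHom_rel k .xx
      · exact RingQuot.mkAlgHom_rel k .yy
      · have := RingQuot.mkAlgHom_rel k (PRel.yx (a := t) (b := 0) (c := 0) (d := -1))
        simp [this])

end Presentations

/-- A unital linear map `τ` on `k[ξ] ⊗ k[ξ]` determined by
`τ(y ⊗ x) = a·1⊗1 + b·x⊗1 + c·1⊗y + d·x⊗y` is a twisting map if, and only if,
`b = c = 0` and `a(1 + d) = 0`; hence every twisted tensor product `k[ξ] ⊗_τ k[ξ]`
is isomorphic to `A_q` for some `q ∈ k` or to `X_t` for some `t ∈ k`. -/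
theorem stmt10 {k : Type*} [Field k] (a b c d : k)
    (τ : DualNumber k ⊗[k] DualNumber k →ₗ[k] DualNumber k ⊗[k] DualNumber k)
    (hτ11 : τ ((1 : DualNumber k) ⊗ₜ (1 : DualNumber k)) =
      (1 : DualNumber k) ⊗ₜ (1 : DualNumber k))
    (hτe1 : τ ((ε : DualNumber k) ⊗ₜ (1 : DualNumber k)) = (1 : DualNumber k) ⊗ₜ ε)
    (hτ1e : τ ((1 : DualNumber k) ⊗ₜ (ε : DualNumber k)) = ε ⊗ₜ (1 : DualNumber k))
    (hτee : τ ((ε : DualNumber k) ⊗ₜ (ε : DualNumber k)) =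
      a • ((1 : DualNumber k) ⊗ₜ (1 : DualNumber k)) +
        b • ((ε : DualNumber k) ⊗ₜ (1 : DualNumber k)) +
        c • ((1 : DualNumber k) ⊗ₜ (ε : DualNumber k)) +
        d • ((ε : DualNumber k) ⊗ₜ (ε : DualNumber k))) :
    (((τ ∘ₗ LinearMap.lTensor (DualNumber k) (LinearMap.mul' k (DualNumber k)) =
        LinearMap.rTensor (DualNumber k) (LinearMap.mul' k (DualNumber k)) ∘ₗ
          (TensorProduct.assoc k (DualNumber k) (DualNumber k)
            (DualNumber k)).symm.toLinearMap ∘ₗ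
          LinearMap.lTensor (DualNumber k) τ ∘ₗ
          (TensorProduct.assoc k (DualNumber k) (DualNumber k)
            (DualNumber k)).toLinearMap ∘ₗ
          LinearMap.rTensor (DualNumber k) τ ∘ₗ
          (TensorProduct.assoc k (DualNumber k) (DualNumber k)
            (DualNumber k)).symm.toLinearMap) ∧
      (τ ∘ₗ LinearMap.rTensor (DualNumber k) (LinearMap.mul' k (DualNumber k)) =
        LinearMap.lTensor (DualNumber k) (LinearMap.mul' k (DualNumber k)) ∘ₗ
          (TensorProduct.assoc k (DualNumber k) (DualNumber k)
            (DualNumber k)).toLinearMap ∘ₗ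
          LinearMap.rTensor (DualNumber k) τ ∘ₗ
          (TensorProduct.assoc k (DualNumber k) (DualNumber k)
            (DualNumber k)).symm.toLinearMap ∘ₗ
          LinearMap.lTensor (DualNumber k) τ ∘ₗ
          (TensorProduct.assoc k (DualNumber k) (DualNumber k)
            (DualNumber k)).toLinearMap)) ↔
      (b = 0 ∧ c = 0 ∧ a * (1 + d) = 0)) ∧
    (b = 0 → c = 0 → a * (1 + d) = 0 →
      Nonempty (RingQuot (PRel k a b c d) ≃ₐ[k] RingQuot (ARel k d)) ∨
        ∃ t : k, Nonempty (RingQuot (PRel k a b c d) ≃ₐ[k] RingQuot (XRel k t))) := by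
  refine ⟨(and_congr (comp_lTensor_mul'_eq_twistMulLeft_iff hτ11 hτe1 hτ1e hτee)
    (comp_rTensor_mul'_eq_twistMulRight_iff hτ11 hτe1 hτ1e hτee)).trans (by tauto), ?_⟩
  rintro rfl rfl h
  rcases mul_eq_zero.mp h with rfl | hd
  · exact .inl ⟨prelAlgEquivARel d⟩
  · obtain rfl : d = -1 := by linear_combination hd
    exact .inr ⟨a, ⟨prelAlgEquivXRel a⟩⟩
end

section
/- Let k be a field of characteristic ≠ 2, α a non-square in k, and q ∈ k with q² ≠ 4αβ. Then C_q = k⟨x,y⟩/(x²−α, y²−β, xy+yx−q) is isomorphic to M₂(k) if and only if there exist u, v ∈ k with u² − αv² = q² − 4αβ. -/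
/-!
Suppose `C_q ≅ M₂(k)`, so that `x` and `y` act on `V = k²`. As `α` is not a square, `x` has no
eigenvector, hence `w, x w` is a basis of `V` for any `w ≠ 0`. Writing `y w = a w + c x w` and
expanding `y² w = β w` with `y x = q - x y` gives `β = a² + c q - α c²`, that is,
`q² - 4αβ = (q - 2αc)² - α (2a)²`.

Conversely, given such `a, c`, the matrices `X = [[0, α], [1, 0]]` and `Y = [[a, q - αc], [c, -a]]`
satisfy the defining relations of `C_q`. The elements `1, x, y, xy` span `C_q`, and their images
`1, X, Y, XY` are linearly independent precisely because `q² - 4αβ ≠ 0`; so the induced map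
`C_q → M₂(k)` is bijective.
-/

open FreeAlgebra

/-- Relations for `C_q = k⟨x,y⟩/(x² − α, y² − β, xy + yx − q)`. -/
inductive CRel (k : Type*) [Field k] (α β q : k) :
    FreeAlgebra k (Fin 2) → FreeAlgebra k (Fin 2) → Prop
  | xx : CRel k α β q (ι k 0 * ι k 0) (algebraMap k _ α)
  | yy : CRel k α β q (ι k 1 * ι k 1) (algebraMap k _ β)
  | mix : CRel k α β q (ι k 0 * ι k 1 + ι k 1 * ι k 0) (algebraMap k _ q)

open Module

theorem exists_sq_sub_mul_sq_eq_iff {k : Type*} [Field k] (h2 : (2 : k) ≠ 0) {α β q : k}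
    (hα : α ≠ 0) :
    (∃ u v : k, u ^ 2 - α * v ^ 2 = q ^ 2 - 4 * α * β) ↔
      ∃ a c : k, a ^ 2 + c * q - α * c ^ 2 = β := by
  constructor
  · rintro ⟨u, v, huv⟩
    refine ⟨v / 2, (q - u) / (2 * α), ?_⟩
    field_simp
    linear_combination -huv
  · rintro ⟨a, c, rfl⟩
    exact ⟨q - 2 * α * c, 2 * a, by ring⟩

theorem exists_sq_add_mul_sub_mul_sq_eq_of_finrank_eq_two {k V : Type*} [Field k]
    [AddCommGroup V] [Module k V] (hV : finrank k V = 2) {α β q : k} (hα : ∀ c : k, c ^ 2 ≠ α)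
    {X Y : Module.End k V} (hX : X * X = algebraMap k _ α) (hY : Y * Y = algebraMap k _ β)
    (hXY : X * Y + Y * X = algebraMap k _ q) :
    ∃ a c : k, a ^ 2 + c * q - α * c ^ 2 = β := by
  have : FiniteDimensional k V := .of_finrank_pos (by omega)
  obtain ⟨w, hw⟩ := (finrank_pos_iff_exists_ne_zero (R := k) (M := V)).mp (by omega)
  have hXX (z : V) : X (X z) = α • z := by simpa using LinearMap.congr_fun hX z
  have hYY (z : V) : Y (Y z) = β • z := by simpa using LinearMap.congr_fun hY z
  have hYX (z : V) : Y (X z) = q • z - X (Y z) :=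
    eq_sub_of_add_eq' (by simpa using LinearMap.congr_fun hXY z)
  have hli : LinearIndependent k ![w, X w] := by
    refine LinearIndependent.pair_iff.mpr fun s t hst ↦ ?_
    obtain rfl | ht := eq_or_ne t 0
    · simpa [hw] using hst
    have hXw : X w = (-s / t) • w := by
      rw [← smul_right_injective V ht |>.eq_iff, eq_neg_of_add_eq_zero_right hst, smul_smul,
        mul_div_cancel₀ _ ht, neg_smul]
    have : ((-s / t) ^ 2 - α) • w = 0 := by
      rw [sub_smul, ← hXX, hXw, map_smul, hXw, smul_smul, sq, sub_self]
    exact absurd (by simpa [hw, sub_eq_zero] using this) (hα (-s / t))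
  obtain ⟨a, c, hac⟩ : ∃ a c : k, a • w + c • X w = Y w := by
    have hspan := hli.span_eq_top_of_card_eq_finrank' (by simp [hV])
    rw [Matrix.range_cons_cons_empty] at hspan
    exact Submodule.mem_span_pair.mp (hspan ▸ Submodule.mem_top)
  refine ⟨a, c, ?_⟩
  have : (a ^ 2 + c * q - α * c ^ 2 - β) • w = 0 := by
    rw [sub_smul, ← hYY, ← hac]
    simp only [map_add, map_smul, hYX, hXX, ← hac]
    module
  simpa [hw, sub_eq_zero] using this

theorem LinearMap.bijective_of_linearIndependent {k V W ι : Type*} [DivisionRing k]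
    [AddCommGroup V] [Module k V] [AddCommGroup W] [Module k W] [FiniteDimensional k W] [Fintype ι]
    {f : V →ₗ[k] W} {b : ι → V} (hb : Submodule.span k (Set.range b) = ⊤)
    (hli : LinearIndependent k (f ∘ b)) (hW : Fintype.card ι = finrank k W) :
    Function.Bijective f := by
  refine ⟨injective_of_linearIndependent hb hli, ?_⟩
  rw [← range_eq_top, eq_top_iff, ← hli.span_eq_top_of_card_eq_finrank' hW, Submodule.span_le]
  exact Set.range_comp_subset_range b f

namespace CRel

variable {k : Type*} [Field k] {α β q : k}

def x : RingQuot (CRel k α β q) := RingQuot.mkAlgHom k (CRel k α β q) (ι k 0)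

def y : RingQuot (CRel k α β q) := RingQuot.mkAlgHom k (CRel k α β q) (ι k 1)

theorem x_mul_x : (x * x : RingQuot (CRel k α β q)) = algebraMap k _ α := by
  rw [x, ← map_mul, RingQuot.mkAlgHom_rel k xx, AlgHom.commutes]

theorem y_mul_y : (y * y : RingQuot (CRel k α β q)) = algebraMap k _ β := by
  rw [y, ← map_mul, RingQuot.mkAlgHom_rel k yy, AlgHom.commutes]

theorem x_mul_y_add_y_mul_x : (x * y + y * x : RingQuot (CRel k α β q)) = algebraMap k _ q := by
  rw [x, y, ← map_mul, ← map_mul, ← map_add, RingQuot.mkAlgHom_rel k mix, AlgHom.commutes]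

theorem y_mul_x : (y * x : RingQuot (CRel k α β q)) = algebraMap k _ q - x * y :=
  eq_sub_of_add_eq' x_mul_y_add_y_mul_x

theorem span_one_x_y_xy_eq_top :
    Submodule.span k (Set.range ![(1 : RingQuot (CRel k α β q)), x, y, x * y]) = ⊤ := by
  set S := Submodule.span k (Set.range ![(1 : RingQuot (CRel k α β q)), x, y, x * y])
  have mem : ∀ i, ![(1 : RingQuot (CRel k α β q)), x, y, x * y] i ∈ S :=
    fun i ↦ Submodule.subset_span (Set.mem_range_self i)
  have alg_mem (c : k) : algebraMap k _ c ∈ S := by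
    rw [Algebra.algebraMap_eq_smul_one]; exact S.smul_mem c (mem 0)
  have mul_mem_of_gen {z : RingQuot (CRel k α β q)} (h : ∀ i, z * ![1, x, y, x * y] i ∈ S) :
      ∀ w ∈ S, z * w ∈ S :=
    Submodule.span_le (p := S.comap (LinearMap.mulLeft k z)).mpr (Set.range_subset_iff.mpr h)
  have x_mul_mem : ∀ w ∈ S, x * w ∈ S := by
    refine mul_mem_of_gen fun i ↦ ?_
    fin_cases i
    · simpa using mem 1
    · simpa [x_mul_x] using alg_mem α
    · exact mem 3
    · show x * (x * y) ∈ S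
      rw [← mul_assoc, x_mul_x, ← Algebra.smul_def]
      exact S.smul_mem α (mem 2)
  have y_mul_mem : ∀ w ∈ S, y * w ∈ S := by
    refine mul_mem_of_gen fun i ↦ ?_
    fin_cases i
    · simpa using mem 2
    · simpa [y_mul_x] using S.sub_mem (alg_mem q) (mem 3)
    · simpa [y_mul_y] using alg_mem β
    · show y * (x * y) ∈ S
      rw [← mul_assoc, y_mul_x, sub_mul, mul_assoc, y_mul_y, ← Algebra.smul_def,
        ← Algebra.commutes, ← Algebra.smul_def]
      exact S.sub_mem (S.smul_mem q (mem 2)) (S.smul_mem β (mem 1))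
  refine Submodule.eq_top_iff'.mpr fun z ↦ ?_
  obtain ⟨w, rfl⟩ := RingQuot.mkAlgHom_surjective k (CRel k α β q) z
  suffices ∀ s ∈ S, RingQuot.mkAlgHom k (CRel k α β q) w * s ∈ S by simpa using this 1 (mem 0)
  induction w using FreeAlgebra.induction with
  | grade0 c => simpa [Algebra.algebraMap_eq_smul_one] using fun s hs ↦ S.smul_mem c hs
  | grade1 i => fin_cases i; exacts [x_mul_mem, y_mul_mem]
  | mul a b ha hb => simpa [mul_assoc] using fun s hs ↦ ha _ (hb s hs)
  | add a b ha hb => simpa [add_mul] using fun s hs ↦ S.add_mem (ha s hs) (hb s hs)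

theorem exists_sq_add_mul_sub_mul_sq_eq {V : Type*} [AddCommGroup V] [Module k V]
    (hV : finrank k V = 2) (hα : ∀ c : k, c ^ 2 ≠ α)
    (φ : RingQuot (CRel k α β q) →ₐ[k] Module.End k V) :
    ∃ a c : k, a ^ 2 + c * q - α * c ^ 2 = β :=
  exists_sq_add_mul_sub_mul_sq_eq_of_finrank_eq_two hV hα (X := φ x) (Y := φ y)
    (by rw [← map_mul, x_mul_x, AlgHom.commutes]) (by rw [← map_mul, y_mul_y, AlgHom.commutes])
    (by rw [← map_mul, ← map_mul, ← map_add, x_mul_y_add_y_mul_x, AlgHom.commutes])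

def lift {A : Type*} [Semiring A] [Algebra k A] (X Y : A) (hX : X * X = algebraMap k A α)
    (hY : Y * Y = algebraMap k A β) (hXY : X * Y + Y * X = algebraMap k A q) :
    RingQuot (CRel k α β q) →ₐ[k] A :=
  RingQuot.liftAlgHom k ⟨FreeAlgebra.lift k ![X, Y], fun _ _ h ↦ by cases h <;> simp [*]⟩

section lift

variable {A : Type*} [Semiring A] [Algebra k A] {X Y : A} (hX : X * X = algebraMap k A α)
    (hY : Y * Y = algebraMap k A β) (hXY : X * Y + Y * X = algebraMap k A q)

@[simp]
theorem lift_x : lift X Y hX hY hXY x = X := by simp [lift, x]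

@[simp]
theorem lift_y : lift X Y hX hY hXY y = Y := by simp [lift, y]

end lift

def toMatrix (a c : k) (hβ : a ^ 2 + c * q - α * c ^ 2 = β) :
    RingQuot (CRel k α β q) →ₐ[k] Matrix (Fin 2) (Fin 2) k :=
  lift !![0, α; 1, 0] !![a, q - α * c; c, -a]
    (by ext i j; fin_cases i <;> fin_cases j <;> simp [Matrix.algebraMap_matrix_apply])
    (by subst hβ; ext i j; fin_cases i <;> fin_cases j <;>
      simp [Matrix.algebraMap_matrix_apply] <;> ring)
    (by ext i j; fin_cases i <;> fin_cases j <;> simp [Matrix.algebraMap_matrix_apply] <;> ring)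

theorem linearIndependent_toMatrix_comp {a c : k} (hβ : a ^ 2 + c * q - α * c ^ 2 = β)
    (hq : q ^ 2 ≠ 4 * α * β) :
    LinearIndependent k ((toMatrix a c hβ).toLinearMap ∘ ![1, x, y, x * y]) := by
  refine Fintype.linearIndependent_iff.mpr fun g hg ↦ ?_
  obtain ⟨⟨h11, h12⟩, h21, h22⟩ :
      (g 0 + g 2 * a + g 3 * (α * c) = 0 ∧ g 1 * α + g 2 * (q - α * c) - g 3 * (α * a) = 0) ∧
        g 1 + g 2 * c + g 3 * a = 0 ∧ g 0 - g 2 * a + g 3 * (q - α * c) = 0 := by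
    simpa [toMatrix, Fin.sum_univ_four, ← Matrix.ext_iff, Fin.forall_fin_two, sub_eq_add_neg]
      using hg
  have hn : q ^ 2 - 4 * α * β ≠ 0 := sub_ne_zero.mpr hq
  -- `h11 - h22` and `h12 - α * h21` form a linear system in `g 2, g 3` with determinant
  -- `(q - 2αc)² - α (2a)² = q² - 4αβ`
  have h2 : g 2 = 0 := by
    refine (mul_eq_zero.mp ?_).resolve_right hn
    linear_combination (q - 2 * α * c) * (h12 - α * h21) - 2 * α * a * (h11 - h22) +
      4 * α * g 2 * hβ
  have h3 : g 3 = 0 := by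
    refine (mul_eq_zero.mp ?_).resolve_right hn
    linear_combination 2 * a * (h12 - α * h21) - (q - 2 * α * c) * (h11 - h22) +
      4 * α * g 3 * hβ
  have h1 : g 1 = 0 := by linear_combination h21 - c * h2 - a * h3
  have h0 : g 0 = 0 := by linear_combination h11 - a * h2 - α * c * h3
  intro i
  fin_cases i <;> assumption

theorem bijective_toMatrix {a c : k} (hβ : a ^ 2 + c * q - α * c ^ 2 = β)
    (hq : q ^ 2 ≠ 4 * α * β) :
    Function.Bijective (toMatrix a c hβ) :=
  LinearMap.bijective_of_linearIndependent (f := (toMatrix a c hβ).toLinearMap)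
    span_one_x_y_xy_eq_top (linearIndependent_toMatrix_comp hβ hq)
    (by rw [finrank_matrix]; simp)

end CRel

/-- Over a field of characteristic ≠ 2 with `α` a non-square and `q² ≠ 4αβ`, the algebra
`C_q` is isomorphic to `M₂(k)` if, and only if, `q² − 4αβ` is a norm `u² − αv²` from `k(√α)`. -/
theorem stmt15 {k : Type*} [Field k] (h2 : (2 : k) ≠ 0) (α β q : k)
    (hα : ∀ c : k, c ^ 2 ≠ α) (hq : q ^ 2 ≠ 4 * α * β) :
    Nonempty (RingQuot (CRel k α β q) ≃ₐ[k] Matrix (Fin 2) (Fin 2) k) ↔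
      ∃ u v : k, u ^ 2 - α * v ^ 2 = q ^ 2 - 4 * α * β := by
  rw [exists_sq_sub_mul_sq_eq_iff h2 fun h ↦ hα 0 (by simp [h])]
  constructor
  · rintro ⟨e⟩
    exact CRel.exists_sq_add_mul_sub_mul_sq_eq (by simp) hα
      ((Matrix.toLinAlgEquiv' : Matrix (Fin 2) (Fin 2) k ≃ₐ[k] _).toAlgHom.comp e.toAlgHom)
  · rintro ⟨a, c, hβ⟩
    exact ⟨.ofBijective _ (CRel.bijective_toMatrix hβ hq)⟩
end
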